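/- arXiv:2309.07240 — 8 statements merged into one kernel-verified Lean document; each statement's English description precedes it below -/
import Mathlib

section
/- If D is formed by taking the disjoint union of digraphs D_1,…,D_r of orders n_1,…,n_r and adding all arcs u→v with u ∈ V(D_i), v ∈ V(D_j) and i < j, then A_D(t) = [n; n_1,…,n_r]_t · Π_{i=1}^r A_{D_i}(t), where [n; n_1,…,n_r]_t is the t-multinomial coefficient [n]_t!/([n_1]_t!⋯[n_r]_t!) and [n]_t! = Π_{k=1}^n (1+t+⋯+t^{k-1}). -/
open Polynomial

/-- Number of `D`-descents of the labeling `σ`: arcs `(u,v)` with `σ u > σ v`. -/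
noncomputable def desD {V : Type*} [Fintype V] (D : V → V → Prop)
    (σ : V ≃ Fin (Fintype.card V)) : ℕ :=
  Nat.card {p : V × V // D p.1 p.2 ∧ σ p.2 < σ p.1}

/-- The Eulerian polynomial of a digraph `D`. -/
noncomputable def eulerianPoly (V : Type*) [Fintype V] [DecidableEq V]
    (D : V → V → Prop) : Polynomial ℤ :=
  ∑ σ : V ≃ Fin (Fintype.card V), X ^ desD D σ

/-- The `t`-factorial `[n]_t! = ∏_{k=1}^n (1 + t + ⋯ + t^{k-1})` as an integer polynomial. -/
noncomputable def qFact (n : ℕ) : Polynomial ℤ :=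
  ∏ k ∈ Finset.range n, ∑ j ∈ Finset.range (k + 1), X ^ j

open Finset

/-!
Sort the vertices of the ordinal sum by their labels. A labeling `σ` is then the same as its block
pattern (which block carries each label) together with the standardized labelings of the blocks.
Descents inside a block are exactly the descents of its standardized labeling, and descents between
blocks depend only on the pattern, so `A_D = C · ∏ A_{D_i}`, where `C` counts the crossings of the
admissible patterns. If every `D_i` is a chain, the ordinal sum is a chain as well. Chains have
Eulerian polynomial `[n]_t!` (the Mahonian distribution of inversions, proved by inserting the
maximal value), so `C · ∏ [n_i]_t! = [n]_t!`, and this eliminates `C`.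
-/

noncomputable def invCount {n : ℕ} (σ : Equiv.Perm (Fin n)) : ℕ :=
  Nat.card {q : Fin n × Fin n // q.1 < q.2 ∧ σ q.2 < σ q.1}

lemma Equiv.optionCongr_removeNone {α β : Type*} {e : Option α ≃ Option β}
    (h : e none = none) : (Equiv.removeNone e).optionCongr = e := by
  ext (_ | x) : 1
  · simp [h]
  · have hx : e (some x) ≠ none := fun hx => Option.some_ne_none x (e.injective (hx.trans h.symm))
    obtain ⟨y, hy⟩ := Option.ne_none_iff_exists'.mp hx
    simp [Equiv.removeNone_some e ⟨y, hy⟩]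

namespace Fin

variable {n : ℕ}

/-- Identifies the position `p` and the value `Fin.last n` with `none`, so that the permutations
sending `p` to the maximum correspond to those fixing `none`. -/
def permOptionEquiv (p : Fin (n + 1)) :
    Equiv.Perm (Fin (n + 1)) ≃ Equiv.Perm (Option (Fin n)) :=
  Equiv.equivCongr (finSuccEquiv' p) (finSuccEquiv' (Fin.last n))

def insertMax (p : Fin (n + 1)) (τ : Equiv.Perm (Fin n)) : Equiv.Perm (Fin (n + 1)) :=
  (permOptionEquiv p).symm τ.optionCongr

def removeMax (p : Fin (n + 1)) (σ : Equiv.Perm (Fin (n + 1))) : Equiv.Perm (Fin n) :=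
  Equiv.removeNone (permOptionEquiv p σ)

@[simp] lemma insertMax_self (p : Fin (n + 1)) (τ : Equiv.Perm (Fin n)) :
    insertMax p τ p = Fin.last n := by
  simp [insertMax, permOptionEquiv, Equiv.equivCongr]

@[simp] lemma insertMax_succAbove (p : Fin (n + 1)) (τ : Equiv.Perm (Fin n)) (k : Fin n) :
    insertMax p τ (p.succAbove k) = (τ k).castSucc := by
  simp [insertMax, permOptionEquiv, Equiv.equivCongr, Fin.succAbove_last]

lemma removeMax_insertMax (p : Fin (n + 1)) (τ : Equiv.Perm (Fin n)) :
    removeMax p (insertMax p τ) = τ := by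
  simp [removeMax, insertMax, Equiv.removeNone_optionCongr]

lemma insertMax_removeMax (p : Fin (n + 1)) {σ : Equiv.Perm (Fin (n + 1))}
    (hσ : σ p = Fin.last n) : insertMax p (removeMax p σ) = σ := by
  rw [insertMax, removeMax, Equiv.optionCongr_removeNone, Equiv.symm_apply_apply]
  simp [permOptionEquiv, Equiv.equivCongr, hσ]

lemma card_lt_succAbove (p : Fin (n + 1)) : #{x : Fin n | p < p.succAbove x} = n - p := by
  have h := Fin.card_Ioi p
  rw [← filter_lt_eq_Ioi, card_filter, Fin.sum_univ_succAbove _ p] at h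
  simp only [lt_self_iff_false, if_false, zero_add] at h
  rw [card_filter, h]
  omega

lemma invCount_insertMax (p : Fin (n + 1)) (τ : Equiv.Perm (Fin n)) :
    invCount (insertMax p τ) = invCount τ + (n - p) := by
  classical
  simp only [invCount, Nat.card_eq_fintype_card, Fintype.card_subtype, card_filter,
    Fintype.sum_prod_type]
  rw [← card_lt_succAbove, card_filter]
  simp [Fin.sum_univ_succAbove _ p, Fin.succAbove_lt_succAbove_iff, Fin.castSucc_lt_last,
    Fin.le_last, sum_add_distrib, add_comm]

end Fin

theorem sum_X_pow_invCount (n : ℕ) :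
    ∑ σ : Equiv.Perm (Fin n), (X : ℤ[X]) ^ invCount σ = qFact n := by
  induction n with
  | zero => simp [qFact, invCount]
  | succ n ih =>
    have fiber (p : Fin (n + 1)) : ∑ σ with σ.symm (Fin.last n) = p, (X : ℤ[X]) ^ invCount σ =
        X ^ (n - (p : ℕ)) * qFact n := by
      rw [← ih, mul_sum]
      refine sum_nbij' (Fin.removeMax p) (Fin.insertMax p) (by simp)
        (by simp [Equiv.symm_apply_eq]) (fun σ hσ => ?_) (fun τ _ => Fin.removeMax_insertMax p τ)
        (fun σ hσ => ?_)
      all_goals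
        replace hσ : Fin.last n = σ p := by simpa [Equiv.symm_apply_eq] using hσ
      · exact Fin.insertMax_removeMax p hσ.symm
      · obtain ⟨τ, rfl⟩ : ∃ τ, Fin.insertMax p τ = σ := ⟨_, Fin.insertMax_removeMax p hσ.symm⟩
        rw [Fin.invCount_insertMax, Fin.removeMax_insertMax, pow_add, mul_comm]
    have reflect : ∑ p : Fin (n + 1), (X : ℤ[X]) ^ (n - (p : ℕ)) = ∑ j ∈ range (n + 1), X ^ j := by
      rw [Fin.sum_univ_eq_sum_range (fun k => (X : ℤ[X]) ^ (n - k)), ← sum_range_reflect (X ^ ·)]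
      simp
    rw [← sum_fiberwise univ (fun σ : Equiv.Perm (Fin (n + 1)) => σ.symm (Fin.last n)),
      sum_congr rfl fun p _ => fiber p, ← sum_mul, reflect, qFact, qFact, prod_range_succ,
      mul_comm]

abbrev Labeling (W : Type*) [Fintype W] := W ≃ Fin (Fintype.card W)

theorem eulerianPoly_eq_qFact_of_isStrictTotalOrder {W : Type*} [Fintype W] [DecidableEq W]
    (R : W → W → Prop) [IsStrictTotalOrder W R] : eulerianPoly W R = qFact (Fintype.card W) := by
  classical
  let _ := linearOrderOfSTO R
  let w : W ≃o Fin (Fintype.card W) := (Fintype.orderIsoFinOfCardEq W rfl).symm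
  rw [eulerianPoly, ← sum_X_pow_invCount]
  refine Fintype.sum_equiv (Equiv.equivCongr w.toEquiv (Equiv.refl _)) _ _ fun σ => ?_
  rw [desD, invCount]
  exact congrArg _ (Nat.card_congr (Equiv.subtypeEquiv (w.toEquiv.prodCongr w.toEquiv)
    fun p => and_congr w.lt_iff_lt.symm (by simp [Equiv.equivCongr])))

lemma desD_or {W : Type*} [Fintype W] {R S : W → W → Prop} (h : ∀ a b, R a b → ¬ S a b)
    (σ : Labeling W) : desD (fun a b => R a b ∨ S a b) σ = desD R σ + desD S σ := by
  classical
  rw [desD, desD, desD, ← Nat.card_sum]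
  exact Nat.card_congr ((Equiv.subtypeEquivRight fun p => or_and_right).trans
    (subtypeOrEquiv _ _ (le_compl_iff_disjoint_right.mp fun p hp hS => h _ _ hp.1 hS.1)))

section OrdinalSum

variable {ι : Type*} [LinearOrder ι] {V : ι → Type*}

def blockwise (D : ∀ i, V i → V i → Prop) (a b : Σ i, V i) : Prop :=
  ∃ (i : ι) (x y : V i), D i x y ∧ a = ⟨i, x⟩ ∧ b = ⟨i, y⟩

def ordinalSum (D : ∀ i, V i → V i → Prop) (a b : Σ i, V i) : Prop :=
  blockwise D a b ∨ a.1 < b.1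

lemma ordinalSum_eq_sigmaLex (D : ∀ i, V i → V i → Prop) :
    ordinalSum D = Sigma.Lex (· < ·) D := by
  ext ⟨i, x⟩ ⟨j, y⟩
  simp only [ordinalSum, blockwise, Sigma.lex_iff, Sigma.mk.inj_iff]
  constructor
  · rintro (⟨k, x', y', h, ⟨rfl, hx⟩, rfl, hy⟩ | h)
    · cases hx; cases hy
      exact Or.inr ⟨rfl, h⟩
    · exact Or.inl h
  · rintro (h | ⟨rfl, h⟩)
    · exact Or.inr h
    · exact Or.inl ⟨i, x, y, h, ⟨rfl, HEq.rfl⟩, rfl, HEq.rfl⟩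

instance isStrictTotalOrder_ordinalSum (D : ∀ i, V i → V i → Prop) [∀ i, IsStrictTotalOrder (V i) (D i)] :
    IsStrictTotalOrder _ (ordinalSum D) := by
  rw [ordinalSum_eq_sigmaLex]
  exact {}

variable [Fintype ι] [∀ i, Fintype (V i)]

def blockPattern (σ : Labeling (Σ i, V i)) (k : Fin (Fintype.card (Σ i, V i))) : ι :=
  (σ.symm k).1

noncomputable def crossings {m : ℕ} (g : Fin m → ι) : ℕ :=
  Nat.card {q : Fin m × Fin m // g q.1 < g q.2 ∧ q.2 < q.1}

lemma desD_fst_lt (σ : Labeling (Σ i, V i)) :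
    desD (fun a b : Σ i, V i => a.1 < b.1) σ = crossings (blockPattern σ) :=
  Nat.card_congr (Equiv.subtypeEquiv (σ.prodCongr σ) fun p => by simp [blockPattern])

variable (V) in
abbrev IsBlockPattern (g : Fin (Fintype.card (Σ i, V i)) → ι) : Prop :=
  ∀ i, Fintype.card {k // g k = i} = Fintype.card (V i)

variable (V) in
def blockPatterns : Finset (Fin (Fintype.card (Σ i, V i)) → ι) :=
  {g | IsBlockPattern V g}

lemma isBlockPattern_blockPattern (σ : Labeling (Σ i, V i)) : IsBlockPattern V (blockPattern σ) :=
  fun i =>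
    Fintype.card_congr ((Equiv.subtypeEquiv σ.symm fun _ => Iff.rfl).trans (Equiv.sigmaSubtype i))

lemma blockPattern_mem_blockPatterns (σ : Labeling (Σ i, V i)) :
    blockPattern σ ∈ blockPatterns V :=
  mem_filter.2 ⟨mem_univ _, isBlockPattern_blockPattern σ⟩

noncomputable def fiberIso {m : ℕ} (g : Fin m → ι) (i : ι)
    (h : Fintype.card {k // g k = i} = Fintype.card (V i)) :
    Fin (Fintype.card (V i)) ≃o {k // g k = i} :=
  Fintype.orderIsoFinOfCardEq _ h

noncomputable def ofBlocks (g : Fin (Fintype.card (Σ i, V i)) → ι)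
    (hg : IsBlockPattern V g) (t : ∀ i, Labeling (V i)) :
    Labeling (Σ i, V i) :=
  (Equiv.sigmaCongrRight fun i => (t i).trans (fiberIso g i (hg i)).toEquiv).trans
    (Equiv.sigmaFiberEquiv g)

noncomputable def toBlock (σ : Labeling (Σ i, V i)) (i : ι) : Labeling (V i) :=
  ((Equiv.sigmaSubtype i).symm.trans (σ.subtypeEquiv fun a => by simp [blockPattern])).trans
    (fiberIso (blockPattern σ) i (isBlockPattern_blockPattern σ i)).symm.toEquiv

lemma toBlock_lt_toBlock_iff (σ : Labeling (Σ i, V i)) (i : ι) (x y : V i) :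
    toBlock σ i x < toBlock σ i y ↔ σ ⟨i, x⟩ < σ ⟨i, y⟩ :=
  (fiberIso _ i _).symm.lt_iff_lt

lemma desD_blockwise (D : ∀ i, V i → V i → Prop) (σ : Labeling (Σ i, V i)) :
    desD (blockwise D) σ = ∑ i, desD (D i) (toBlock σ i) := by
  let f : (Σ i, {q : V i × V i // D i q.1 q.2 ∧ toBlock σ i q.2 < toBlock σ i q.1}) →
      {p : (Σ i, V i) × (Σ i, V i) // blockwise D p.1 p.2 ∧ σ p.2 < σ p.1} :=
    fun ⟨i, q, hq⟩ => ⟨(⟨i, q.1⟩, ⟨i, q.2⟩), ⟨i, q.1, q.2, hq.1, rfl, rfl⟩,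
      (toBlock_lt_toBlock_iff σ i _ _).1 hq.2⟩
  have hf : Function.Bijective f := by
    refine ⟨?_, ?_⟩
    · rintro ⟨i, ⟨x, y⟩, h⟩ ⟨j, ⟨x', y'⟩, h'⟩ hxy
      simp only [f, Subtype.mk.injEq, Prod.mk.injEq, Sigma.mk.inj_iff] at hxy
      obtain ⟨⟨rfl, hx⟩, -, hy⟩ := hxy
      cases hx; cases hy; rfl
    · rintro ⟨⟨a, b⟩, ⟨i, x, y, hD, ha, hb⟩, hlt⟩
      obtain rfl : a = ⟨i, x⟩ := ha
      obtain rfl : b = ⟨i, y⟩ := hb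
      exact ⟨⟨i, (x, y), hD, (toBlock_lt_toBlock_iff σ i _ _).2 hlt⟩, rfl⟩
  simp only [desD]
  rw [← Nat.card_sigma]
  exact Nat.card_congr (Equiv.ofBijective f hf).symm

lemma desD_ordinalSum (D : ∀ i, V i → V i → Prop) (σ : Labeling (Σ i, V i)) :
    desD (ordinalSum D) σ = ∑ i, desD (D i) (toBlock σ i) + crossings (blockPattern σ) := by
  rw [← desD_blockwise, ← desD_fst_lt]
  exact desD_or (fun _ _ ⟨i, x, y, _, ha, hb⟩ h => by simp [ha, hb] at h) σ

lemma blockPattern_ofBlocks (g : Fin (Fintype.card (Σ i, V i)) → ι)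
    (hg : IsBlockPattern V g) (t : ∀ i, Labeling (V i)) :
    blockPattern (ofBlocks g hg t) = g :=
  rfl

lemma toBlock_ofBlocks (g : Fin (Fintype.card (Σ i, V i)) → ι)
    (hg : IsBlockPattern V g) (t : ∀ i, Labeling (V i)) :
    toBlock (ofBlocks g hg t) = t := by
  ext i x : 2
  exact (fiberIso g i (hg i)).symm_apply_apply (t i x)

lemma ofBlocks_toBlock {g : Fin (Fintype.card (Σ i, V i)) → ι}
    (hg : IsBlockPattern V g) {σ : Labeling (Σ i, V i)}
    (hσ : blockPattern σ = g) : ofBlocks g hg (toBlock σ) = σ := by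
  subst hσ
  ext ⟨i, x⟩ : 1
  exact congrArg Subtype.val ((fiberIso _ i _).apply_symm_apply _)

variable (V) in
noncomputable def crossingPoly : ℤ[X] :=
  ∑ g ∈ blockPatterns V, X ^ crossings g

theorem eulerianPoly_ordinalSum [∀ i, DecidableEq (V i)] (D : ∀ i, V i → V i → Prop) :
    eulerianPoly (Σ i, V i) (ordinalSum D) = crossingPoly V * ∏ i, eulerianPoly (V i) (D i) := by
  rw [eulerianPoly, ← sum_fiberwise_of_maps_to fun σ _ => blockPattern_mem_blockPatterns σ,
    crossingPoly, sum_mul]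
  refine sum_congr rfl fun g hg => ?_
  replace hg : IsBlockPattern V g := (mem_filter.1 hg).2
  simp only [eulerianPoly, Fintype.prod_sum, mul_sum]
  refine sum_nbij' (fun σ => toBlock σ) (ofBlocks g hg) (by simp) (by simp [blockPattern_ofBlocks])
    (fun σ hσ => ofBlocks_toBlock hg (by simpa using hσ)) (fun t _ => toBlock_ofBlocks g hg t)
    (fun σ hσ => ?_)
  rw [desD_ordinalSum, pow_add, (by simpa using hσ : blockPattern σ = g), prod_pow_eq_pow_sum,
    mul_comm]

theorem crossingPoly_mul_prod_qFact :
    crossingPoly V * ∏ i, qFact (Fintype.card (V i)) = qFact (Fintype.card (Σ i, V i)) := by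
  classical
  have h := eulerianPoly_ordinalSum fun i => @WellOrderingRel (V i)
  simp only [eulerianPoly_eq_qFact_of_isStrictTotalOrder] at h
  exact h.symm

end OrdinalSum

theorem stmt3_general {r : ℕ} (V : Fin r → Type*) [∀ i, Fintype (V i)] [∀ i, DecidableEq (V i)]
    (D : ∀ i, V i → V i → Prop) :
    eulerianPoly (Σ i, V i)
        (fun a b => (∃ (i : Fin r) (x y : V i), D i x y ∧ a = ⟨i, x⟩ ∧ b = ⟨i, y⟩)
          ∨ a.1 < b.1) *
      ∏ i, qFact (Fintype.card (V i)) =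
    qFact (Fintype.card (Σ i, V i)) * ∏ i, eulerianPoly (V i) (D i) := by
  change eulerianPoly _ (ordinalSum D) * _ = _
  rw [eulerianPoly_ordinalSum, ← crossingPoly_mul_prod_qFact]
  ring

theorem stmt3 {r : ℕ} (V : Fin r → Type*) [∀ i, Fintype (V i)] [∀ i, DecidableEq (V i)]
    (D : ∀ i, V i → V i → Prop) (hloop : ∀ i x, ¬ D i x x) :
    eulerianPoly (Σ i, V i)
        (fun a b => (∃ (i : Fin r) (x y : V i), D i x y ∧ a = ⟨i, x⟩ ∧ b = ⟨i, y⟩)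
          ∨ a.1 < b.1) *
      ∏ i, qFact (Fintype.card (V i)) =
    qFact (Fintype.card (Σ i, V i)) * ∏ i, eulerianPoly (V i) (D i) :=
  stmt3_general V D
end

section
/- If D and D' are two orientations of the same finite simple graph G, then |A_D(−1)| = |A_{D'}(−1)|. -/
open Polynomial

/-- `D` is an orientation of the simple graph `G`: every arc is an edge of `G`,
and each edge of `G` receives exactly one of the two possible directions. -/
def IsOrientation {V : Type*} (G : SimpleGraph V) (D : V → V → Prop) : Prop :=
  (∀ u v, D u v → G.Adj u v) ∧ ∀ u v, G.Adj u v → (D u v ↔ ¬ D v u)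

lemma split_card_aux {V : Type*} [Fintype V] (P Q : V × V → Prop) :
    Nat.card {p : V × V // P p ∧ Q p} + Nat.card {p : V × V // P p ∧ ¬ Q p}
      = Nat.card {p : V × V // P p} := by
  classical
  rw [← Nat.card_sum]
  exact Nat.card_congr
    (((Equiv.subtypeSubtypeEquivSubtypeInter P Q).symm.sumCongr
      (Equiv.subtypeSubtypeEquivSubtypeInter P (fun p => ¬ Q p)).symm).trans
      (Equiv.sumCompl _))

lemma key_aux {V : Type*} [Fintype V] {G : SimpleGraph V} {D D' : V → V → Prop}
    (hD : IsOrientation G D) (hD' : IsOrientation G D')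
    (σ : V ≃ Fin (Fintype.card V)) :
    desD D σ + desD D' σ
      ≡ Nat.card {p : V × V // D p.1 p.2 ∧ ¬ D' p.1 p.2} [MOD 2] := by
  classical
  unfold desD
  have ha := split_card_aux (fun p : V × V => D p.1 p.2 ∧ σ p.2 < σ p.1)
    (fun p => D' p.1 p.2)
  have hb := split_card_aux (fun p : V × V => D' p.1 p.2 ∧ σ p.2 < σ p.1)
    (fun p => D p.1 p.2)
  have hc := split_card_aux (fun p : V × V => D p.1 p.2 ∧ ¬ D' p.1 p.2)
    (fun p => σ p.2 < σ p.1)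
  have e1 : Nat.card {p : V × V // (D' p.1 p.2 ∧ σ p.2 < σ p.1) ∧ D p.1 p.2}
      = Nat.card {p : V × V // (D p.1 p.2 ∧ σ p.2 < σ p.1) ∧ D' p.1 p.2} :=
    Nat.card_congr (Equiv.subtypeEquivRight (fun p => by tauto))
  have e2 : Nat.card {p : V × V // (D p.1 p.2 ∧ σ p.2 < σ p.1) ∧ ¬ D' p.1 p.2}
      = Nat.card {p : V × V // (D p.1 p.2 ∧ ¬ D' p.1 p.2) ∧ σ p.2 < σ p.1} :=
    Nat.card_congr (Equiv.subtypeEquivRight (fun p => by tauto))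
  have e3 : Nat.card {p : V × V // (D' p.1 p.2 ∧ σ p.2 < σ p.1) ∧ ¬ D p.1 p.2}
      = Nat.card {p : V × V // (D p.1 p.2 ∧ ¬ D' p.1 p.2) ∧ ¬ (σ p.2 < σ p.1)} := by
    apply Nat.card_congr
    refine Equiv.subtypeEquiv (Equiv.prodComm V V) (fun p => ?_)
    simp only [Equiv.prodComm_apply, Prod.fst_swap, Prod.snd_swap]
    constructor
    · rintro ⟨⟨hd', hlt⟩, hnd⟩
      have hadj : G.Adj p.1 p.2 := hD'.1 _ _ hd'
      exact ⟨⟨(hD.2 _ _ hadj.symm).mpr hnd, (hD'.2 _ _ hadj).mp hd'⟩,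
        not_lt_of_gt hlt⟩
    · rintro ⟨⟨hd, hnd'⟩, hnl⟩
      have hadj : G.Adj p.2 p.1 := hD.1 _ _ hd
      have hne : σ p.2 ≠ σ p.1 := fun h => hadj.ne (σ.injective h)
      refine ⟨⟨?_, lt_of_le_of_ne (not_lt.mp hnl) hne⟩, ?_⟩
      · by_contra h
        exact hnd' ((hD'.2 _ _ hadj).mpr h)
      · exact fun h => (hD.2 _ _ hadj).mp hd h
  rw [e1, e3] at hb
  rw [e2] at ha
  simp only [Nat.ModEq]
  omega

lemma negpow_congr_aux {a b : ℕ} (h : a ≡ b [MOD 2]) : (-1 : ℤ) ^ a = (-1 : ℤ) ^ b := by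
  rcases Nat.even_or_odd a with he | ho
  · rw [he.neg_one_pow, Even.neg_one_pow]
    rw [Nat.even_iff] at he ⊢
    simp only [Nat.ModEq] at h
    omega
  · rw [ho.neg_one_pow, Odd.neg_one_pow]
    rw [Nat.odd_iff] at ho ⊢
    simp only [Nat.ModEq] at h
    omega

theorem stmt6 {V : Type*} [Fintype V] [DecidableEq V] (G : SimpleGraph V)
    (D D' : V → V → Prop) (hD : IsOrientation G D) (hD' : IsOrientation G D') :
    |(eulerianPoly V D).eval (-1)| = |(eulerianPoly V D').eval (-1)| := by
  classical
  set c := Nat.card {p : V × V // D p.1 p.2 ∧ ¬ D' p.1 p.2} with hcdef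
  have heval : ∀ E : V → V → Prop,
      (eulerianPoly V E).eval (-1) = ∑ σ : V ≃ Fin (Fintype.card V), (-1 : ℤ) ^ desD E σ := by
    intro E
    simp [eulerianPoly, eval_finset_sum]
  have hterm : ∀ σ : V ≃ Fin (Fintype.card V),
      (-1 : ℤ) ^ desD D σ = (-1 : ℤ) ^ c * (-1 : ℤ) ^ desD D' σ := by
    intro σ
    rw [← pow_add]
    apply negpow_congr_aux
    have := key_aux hD hD' σ
    simp only [Nat.ModEq] at this ⊢
    omega
  rw [heval, heval]
  have : ∑ σ : V ≃ Fin (Fintype.card V), (-1 : ℤ) ^ desD D σ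
      = (-1 : ℤ) ^ c * ∑ σ : V ≃ Fin (Fintype.card V), (-1 : ℤ) ^ desD D' σ := by
    rw [Finset.mul_sum]
    exact Finset.sum_congr rfl (fun σ _ => hterm σ)
  rw [this, abs_mul, abs_pow, abs_neg, abs_one, one_pow, one_mul]
end

section
/- If a finite simple graph G has an odd number of edges, then A_D(−1) = 0 for every orientation D of G. -/
open Polynomial

private lemma desD_rev {V : Type*} [Fintype V] (D : V → V → Prop)
    (σ : V ≃ Fin (Fintype.card V)) :
    desD D (σ.trans Fin.revPerm) = Nat.card {p : V × V // D p.1 p.2 ∧ σ p.1 < σ p.2} := by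
  unfold desD
  exact Nat.card_congr (Equiv.subtypeEquivRight fun p => by simp [Fin.rev_lt_rev])

private lemma desD_add {V : Type*} [Fintype V] (D : V → V → Prop)
    (hne : ∀ u v, D u v → u ≠ v) (σ : V ≃ Fin (Fintype.card V)) :
    desD D σ + desD D (σ.trans Fin.revPerm) = Nat.card {p : V × V // D p.1 p.2} := by
  rw [desD_rev]
  unfold desD
  have h1 : Nat.card {p : V × V // D p.1 p.2 ∧ σ p.2 < σ p.1}
      = Set.ncard {p : V × V | D p.1 p.2 ∧ σ p.2 < σ p.1} := Nat.card_coe_set_eq _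
  have h2 : Nat.card {p : V × V // D p.1 p.2 ∧ σ p.1 < σ p.2}
      = Set.ncard {p : V × V | D p.1 p.2 ∧ σ p.1 < σ p.2} := Nat.card_coe_set_eq _
  have h3 : Nat.card {p : V × V // D p.1 p.2}
      = Set.ncard {p : V × V | D p.1 p.2} := Nat.card_coe_set_eq _
  rw [h1, h2, h3]
  rw [← Set.ncard_union_eq]
  · congr 1
    ext p
    simp only [Set.mem_union, Set.mem_setOf_eq]
    constructor
    · rintro (⟨h, _⟩ | ⟨h, _⟩) <;> exact h
    · intro h
      have : σ p.1 ≠ σ p.2 := fun he => hne _ _ h (σ.injective he)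
      rcases this.lt_or_gt with hlt | hlt
      · exact Or.inr ⟨h, hlt⟩
      · exact Or.inl ⟨h, hlt⟩
  · rw [Set.disjoint_left]
    intro p hp hq
    exact absurd (hp.2.trans hq.2) (lt_irrefl _)

private lemma arcs_card {V : Type*} (G : SimpleGraph V) (D : V → V → Prop)
    (hD : IsOrientation G D) :
    Nat.card {p : V × V // D p.1 p.2} = Nat.card G.edgeSet := by
  apply Nat.card_eq_of_bijective
    (fun p => ⟨s(p.1.1, p.1.2), (G.mem_edgeSet).mpr (hD.1 _ _ p.2)⟩)
  constructor
  · rintro ⟨⟨u, v⟩, huv⟩ ⟨⟨u', v'⟩, huv'⟩ h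
    simp only [Subtype.mk.injEq, Sym2.eq_iff] at h
    rcases h with ⟨rfl, rfl⟩ | ⟨rfl, rfl⟩
    · rfl
    · exact absurd huv' ((hD.2 _ _ (hD.1 _ _ huv)).mp huv)
  · rintro ⟨e, he⟩
    induction e with
    | h u v =>
      have hadj : G.Adj u v := (G.mem_edgeSet).mp he
      by_cases h : D u v
      · exact ⟨⟨(u, v), h⟩, rfl⟩
      · have : D v u := by
          by_contra h'
          exact h ((hD.2 u v hadj).mpr h')
        exact ⟨⟨(v, u), this⟩, by simp [Sym2.eq_swap]⟩

theorem stmt7 {V : Type*} [Fintype V] [DecidableEq V] (G : SimpleGraph V)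
    (hodd : Odd (Nat.card G.edgeSet)) (D : V → V → Prop) (hD : IsOrientation G D) :
    (eulerianPoly V D).eval (-1) = 0 := by
  have hne : ∀ u v, D u v → u ≠ v := fun u v h => (hD.1 u v h).ne
  have key : ∀ σ : V ≃ Fin (Fintype.card V),
      Odd (desD D σ + desD D (σ.trans Fin.revPerm)) := by
    intro σ
    rw [desD_add D hne σ, arcs_card G D hD]
    exact hodd
  unfold eulerianPoly
  rw [eval_finset_sum]
  simp only [eval_pow, eval_X]
  refine Finset.sum_involution (fun σ _ => σ.trans Fin.revPerm) ?_ ?_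
    (fun σ _ => Finset.mem_univ _) ?_
  · intro σ _
    have h := key σ
    rcases Nat.even_or_odd (desD D σ) with he | ho
    · have hb : Odd (desD D (σ.trans Fin.revPerm)) := by
        obtain ⟨k, hk⟩ := h; obtain ⟨m, hm⟩ := he
        exact ⟨k - m, by omega⟩
      simp [he.neg_one_pow, hb.neg_one_pow]
    · have hb : Even (desD D (σ.trans Fin.revPerm)) := by
        obtain ⟨k, hk⟩ := h; obtain ⟨m, hm⟩ := ho
        exact ⟨k - m, by omega⟩
      simp [ho.neg_one_pow, hb.neg_one_pow]
  · intro σ _ _ hfix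
    have hfix' : σ.trans Fin.revPerm = σ := hfix
    have h := key σ
    rw [hfix'] at h
    obtain ⟨k, hk⟩ := h
    omega
  · intro σ _
    ext v
    simp
end

section
/- For any n-vertex graph G, ν(G) ≤ η(G), where ν(G) = |A_D(−1)| for any orientation D of G, and η(G) is the number of even sequences of G. -/
open Polynomial

/-- The number of edges of the subgraph of `G` induced by the vertex set `S`. -/
noncomputable def inducedEdgeCount {V : Type*} (G : SimpleGraph V) (S : Set V) : ℕ :=
  Nat.card {e : Sym2 V // e ∈ G.edgeSet ∧ ∀ x ∈ e, x ∈ S}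

/-- `η(G)`: the number of even sequences of `G`, i.e. orderings `π` of the vertices
such that every prefix induces a subgraph with an even number of edges. -/
noncomputable def eta (V : Type*) [Fintype V] (G : SimpleGraph V) : ℕ :=
  Nat.card {π : Fin (Fintype.card V) ≃ V //
    ∀ i, Even (inducedEdgeCount G {v | ∃ j ≤ i, π j = v})}

namespace Stmt10Aux

set_option linter.unusedSectionVars false

variable {V : Type*}

/-- Descent count with respect to an arbitrary labeling by `Fin n`. -/
noncomputable def desN (D : V → V → Prop) {n : ℕ} (σ : V ≃ Fin n) : ℕ :=
  Nat.card {p : V × V // D p.1 p.2 ∧ σ p.2 < σ p.1}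

/-- The signed sum `∑ σ (-1)^{des σ}`, i.e. the Eulerian polynomial evaluated at `-1`. -/
noncomputable def SS (V : Type*) [Fintype V] [DecidableEq V] (D : V → V → Prop) (n : ℕ) : ℤ :=
  ∑ σ : V ≃ Fin n, (-1) ^ desN D σ

/-- The number of even sequences, with an arbitrary index type `Fin n`. -/
noncomputable def etaN (V : Type*) (G : SimpleGraph V) (n : ℕ) : ℕ :=
  Nat.card {π : Fin n ≃ V // ∀ i, Even (inducedEdgeCount G {v | ∃ j ≤ i, π j = v})}

section Ext

variable [DecidableEq V]

/-- Extend a labeling of `V \ {v}` by `Fin n` to a labeling of `V` by `Fin (n+1)`,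
giving `v` the last label. -/
def extE (v : V) {n : ℕ} (τ : {u : V // u ≠ v} ≃ Fin n) : V ≃ Fin (n + 1) where
  toFun u := if h : u = v then Fin.last n else (τ ⟨u, h⟩).castSucc
  invFun i := if h : i = Fin.last n then v else (τ.symm (i.castPred h)).1
  left_inv u := by
    by_cases h : u = v
    · simp [h]
    · simp only [dif_neg h, dif_neg (Fin.castSucc_lt_last _).ne, Fin.castPred_castSucc,
        Equiv.symm_apply_apply]
  right_inv i := by
    by_cases h : i = Fin.last n
    · simp [h]
    · simp only [dif_neg h, dif_neg (τ.symm (i.castPred h)).2, Subtype.coe_eta,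
        Equiv.apply_symm_apply, Fin.castSucc_castPred]

lemma extE_self (v : V) {n : ℕ} (τ : {u : V // u ≠ v} ≃ Fin n) : extE v τ v = Fin.last n :=
  dif_pos rfl

lemma extE_ne (v : V) {n : ℕ} (τ : {u : V // u ≠ v} ≃ Fin n) {u : V} (h : u ≠ v) :
    extE v τ u = (τ ⟨u, h⟩).castSucc := dif_neg h

lemma extE_symm_last (v : V) {n : ℕ} (τ : {u : V // u ≠ v} ≃ Fin n) :
    (extE v τ).symm (Fin.last n) = v := dif_pos rfl

lemma extE_symm_ne (v : V) {n : ℕ} (τ : {u : V // u ≠ v} ≃ Fin n) {i : Fin (n+1)}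
    (h : i ≠ Fin.last n) : (extE v τ).symm i = (τ.symm (i.castPred h)).1 := dif_neg h

/-- Restriction of a labeling to the complement of the last-labeled vertex. -/
def restr {n : ℕ} (σ : V ≃ Fin (n + 1)) : {u : V // u ≠ σ.symm (Fin.last n)} ≃ Fin n where
  toFun u := (σ u.1).castPred (fun hc => u.2 ((Equiv.eq_symm_apply σ).2 hc))
  invFun i := ⟨σ.symm i.castSucc, fun hc => (Fin.castSucc_lt_last i).ne (by
    simpa using congrArg σ hc)⟩
  left_inv u := by simp [Fin.castSucc_castPred]
  right_inv i := by simp [Fin.castPred_castSucc]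

lemma extE_bij {n : ℕ} :
    Function.Bijective (fun x : Σ v : V, ({u : V // u ≠ v} ≃ Fin n) => extE x.1 x.2) := by
  constructor
  · rintro ⟨v, τ⟩ ⟨w, ρ⟩ h
    simp only at h
    have hvw : v = w := by
      by_contra hne
      have hv : extE w ρ v = Fin.last n := by rw [← h, extE_self]
      rw [extE_ne w ρ hne] at hv
      exact (Fin.castSucc_lt_last _).ne hv
    subst hvw
    have : τ = ρ := by
      ext u
      have h2 : extE v τ u.1 = extE v ρ u.1 := by rw [h]
      rw [extE_ne v τ u.2, extE_ne v ρ u.2] at h2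
      exact congrArg Fin.val (Fin.castSucc_injective _ h2)
    rw [this]
  · intro σ
    refine ⟨⟨σ.symm (Fin.last n), restr σ⟩, ?_⟩
    ext u
    by_cases h : u = σ.symm (Fin.last n)
    · simp only [extE_self, h, Equiv.apply_symm_apply]
    · rw [extE_ne _ _ h]
      simp [restr, Fin.castSucc_castPred]

lemma desN_extE [Fintype V] {G : SimpleGraph V} {D : V → V → Prop} (hD : IsOrientation G D)
    (v : V) {n : ℕ} (τ : {u : V // u ≠ v} ≃ Fin n) :
    desN D (extE v τ) = desN (fun a b : {u : V // u ≠ v} => D a.1 b.1) τ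
      + Nat.card {u : V // D v u} := by
  classical
  rw [desN, desN, ← Nat.card_sum]
  refine (Nat.card_congr (Equiv.ofBijective (Sum.elim
      (fun q : {q : {u : V // u ≠ v} × {u : V // u ≠ v} // D q.1.1 q.2.1 ∧ τ q.2 < τ q.1} =>
        (⟨(q.1.1.1, q.1.2.1), q.2.1, by
          rw [extE_ne v τ q.1.2.2, extE_ne v τ q.1.1.2]
          exact Fin.castSucc_lt_castSucc_iff.2 q.2.2⟩ :
          {p : V × V // D p.1 p.2 ∧ extE v τ p.2 < extE v τ p.1}))
      (fun u : {u : V // D v u} =>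
        ⟨(v, u.1), u.2, by
          rw [extE_self, extE_ne v τ (hD.1 v u.1 u.2).ne']
          exact Fin.castSucc_lt_last _⟩)) ⟨?_, ?_⟩)).symm
  · rintro (⟨⟨a, b⟩, hab⟩ | ⟨u, hu⟩) (⟨⟨c, d⟩, hcd⟩ | ⟨w, hw⟩) h <;>
      simp only [Sum.elim_inl, Sum.elim_inr, Subtype.mk.injEq, Prod.mk.injEq] at h
    · simp only [Sum.inl.injEq, Subtype.mk.injEq, Prod.mk.injEq]
      exact ⟨Subtype.ext h.1, Subtype.ext h.2⟩
    · exact absurd h.1 a.2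
    · exact absurd h.1.symm c.2
    · simp only [Sum.inr.injEq]
      exact Subtype.ext h.2
  · rintro ⟨⟨a, b⟩, hab, hlt⟩
    have hb : b ≠ v := by
      intro hbv; subst hbv
      rw [extE_self] at hlt
      exact absurd hlt (Fin.le_last _).not_gt
    by_cases ha : a = v
    · subst ha
      exact ⟨Sum.inr ⟨b, hab⟩, rfl⟩
    · refine ⟨Sum.inl ⟨(⟨a, ha⟩, ⟨b, hb⟩), hab, ?_⟩, rfl⟩
      rw [extE_ne v τ hb, extE_ne v τ ha] at hlt
      exact Fin.castSucc_lt_castSucc_iff.1 hlt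

end Ext

lemma card_arcs [Fintype V] {G : SimpleGraph V} {D : V → V → Prop} (hD : IsOrientation G D) :
    Nat.card {p : V × V // D p.1 p.2} = inducedEdgeCount G Set.univ := by
  rw [inducedEdgeCount]
  apply Nat.card_congr
  refine Equiv.ofBijective (fun p => ⟨s(p.1.1, p.1.2), (hD.1 _ _ p.2), fun x _ => trivial⟩)
    ⟨?_, ?_⟩
  · rintro ⟨⟨a, b⟩, hab⟩ ⟨⟨c, d⟩, hcd⟩ h
    simp only [Subtype.mk.injEq, Sym2.eq, Sym2.rel_iff', Prod.mk.injEq, Prod.swap_prod_mk] at h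
    rcases h with ⟨rfl, rfl⟩ | ⟨rfl, rfl⟩
    · rfl
    · exact absurd hab ((hD.2 _ _ (hD.1 _ _ hcd)).1 hcd)
  · rintro ⟨e, he, hx⟩
    revert he hx
    induction e using Sym2.ind with
    | _ a b =>
      intro he hx
      rcases (em (D a b)) with h | h
      · exact ⟨⟨(a, b), h⟩, rfl⟩
      · have hba : D b a := by
          have h2 := hD.2 b a ((SimpleGraph.mem_edgeSet G).1 he).symm
          by_contra hba
          exact hba (h2.2 h)
        exact ⟨⟨(b, a), hba⟩, Subtype.ext Sym2.eq_swap⟩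

lemma neg_one_pow_eq {x y a : ℕ} (h : x + y = a) (ha : Odd a) :
    (-1 : ℤ) ^ x = -(-1 : ℤ) ^ y := by
  rcases Nat.even_or_odd y with hy | hy
  · have hx : Odd x := by
      rcases hy with ⟨k, hk⟩; rcases ha with ⟨m, hm⟩
      exact ⟨m - k, by omega⟩
    rw [hx.neg_one_pow, hy.neg_one_pow]
  · have hx : Even x := by
      rcases hy with ⟨k, hk⟩; rcases ha with ⟨m, hm⟩
      exact ⟨m - k, by omega⟩
    rw [hx.neg_one_pow, hy.neg_one_pow]
    ring

lemma desN_rev_add [Fintype V] {G : SimpleGraph V} {D : V → V → Prop} (hD : IsOrientation G D)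
    {n : ℕ} (σ : V ≃ Fin n) :
    desN D (σ.trans Fin.revPerm) + desN D σ = Nat.card {p : V × V // D p.1 p.2} := by
  have hrev : desN D (σ.trans Fin.revPerm)
      = Nat.card {p : V × V // D p.1 p.2 ∧ σ p.1 < σ p.2} := by
    rw [desN]
    apply Nat.card_congr
    refine Equiv.subtypeEquivRight (fun p => ?_)
    show D p.1 p.2 ∧ (σ.trans Fin.revPerm) p.2 < (σ.trans Fin.revPerm) p.1 ↔
      D p.1 p.2 ∧ σ p.1 < σ p.2
    simp only [Equiv.trans_apply]
    rw [show Fin.revPerm (σ p.2) = (σ p.2).rev from rfl,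
      show Fin.revPerm (σ p.1) = (σ p.1).rev from rfl, Fin.rev_lt_rev]
  rw [hrev, desN, ← Nat.card_sum]
  apply Nat.card_congr
  · refine Equiv.ofBijective (Sum.elim (fun q => ⟨q.1, q.2.1⟩) (fun q => ⟨q.1, q.2.1⟩)) ⟨?_, ?_⟩
    · rintro (⟨p, hp⟩ | ⟨p, hp⟩) (⟨q, hq⟩ | ⟨q, hq⟩) h <;>
        simp only [Sum.elim_inl, Sum.elim_inr, Subtype.mk.injEq] at h <;> subst h
      · rfl
      · exact absurd hq.2 hp.2.not_gt
      · exact absurd hq.2 hp.2.not_gt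
      · rfl
    · rintro ⟨p, hp⟩
      have hne : σ p.1 ≠ σ p.2 := fun hE => (hD.1 _ _ hp).ne (σ.injective hE)
      rcases hne.lt_or_gt with h | h
      · exact ⟨Sum.inl ⟨p, hp, h⟩, rfl⟩
      · exact ⟨Sum.inr ⟨p, hp, h⟩, rfl⟩

lemma SS_eq_zero [Fintype V] [DecidableEq V] {G : SimpleGraph V} {D : V → V → Prop}
    (hD : IsOrientation G D) {n : ℕ} (hodd : Odd (inducedEdgeCount G Set.univ)) :
    SS V D n = 0 := by
  have hbij : Function.Bijective (fun σ : V ≃ Fin n => σ.trans Fin.revPerm) := by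
    apply Function.Involutive.bijective
    intro σ; ext x
    simp [Fin.rev_rev, show ∀ i, Fin.revPerm i = Fin.rev i from fun _ => rfl]
  have key : SS V D n = -SS V D n := by
    calc SS V D n = ∑ σ : V ≃ Fin n, (-1 : ℤ) ^ desN D (σ.trans Fin.revPerm) :=
          (Fintype.sum_bijective _ hbij _ _ (fun σ => rfl)).symm
    _ = ∑ σ : V ≃ Fin n, -((-1 : ℤ) ^ desN D σ) := by
          refine Finset.sum_congr rfl (fun σ _ => ?_)
          rw [← card_arcs hD] at hodd
          exact neg_one_pow_eq (desN_rev_add hD σ) hodd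
    _ = -SS V D n := by rw [SS, ← Finset.sum_neg_distrib]
  omega

lemma natAbs_sum_le {ι : Type*} (s : Finset ι) (f : ι → ℤ) :
    (∑ i ∈ s, f i).natAbs ≤ ∑ i ∈ s, (f i).natAbs := by
  have h := Finset.abs_sum_le_sum_abs f s
  have h2 : (((∑ i ∈ s, f i).natAbs : ℤ)) ≤ ∑ i ∈ s, (((f i).natAbs : ℤ)) := by
    rw [← Int.abs_eq_natAbs]
    refine h.trans (le_of_eq (Finset.sum_congr rfl fun i _ => Int.abs_eq_natAbs _))
  exact_mod_cast h2

lemma nat_card_sigma {ι : Type*} [Fintype ι] (A : ι → Type*) [∀ i, Finite (A i)] :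
    Nat.card (Sigma A) = ∑ i, Nat.card (A i) := by
  letI : ∀ i, Fintype (A i) := fun i => Fintype.ofFinite (A i)
  simp [Nat.card_eq_fintype_card]

lemma SS_succ [Fintype V] [DecidableEq V] {G : SimpleGraph V} {D : V → V → Prop}
    (hD : IsOrientation G D) (n : ℕ) :
    SS V D (n + 1) = ∑ v : V,
      (-1) ^ (Nat.card {u : V // D v u}) * SS {u : V // u ≠ v} (fun a b => D a.1 b.1) n := by
  have h1 : SS V D (n + 1) = ∑ x : Σ v : V, ({u : V // u ≠ v} ≃ Fin n),
      (-1 : ℤ) ^ (Nat.card {u : V // D x.1 u})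
        * (-1) ^ desN (fun a b : {u : V // u ≠ x.1} => D a.1 b.1) x.2 := by
    rw [SS]
    refine (Fintype.sum_bijective _ extE_bij _ _ (fun x => ?_)).symm
    rw [desN_extE hD, pow_add, mul_comm]
  rw [h1, ← Finset.univ_sigma_univ, Finset.sum_sigma]
  refine Finset.sum_congr rfl fun v _ => ?_
  rw [SS, Finset.mul_sum]

lemma prefix_last {n : ℕ} (π : Fin (n + 1) ≃ V) :
    {w | ∃ j ≤ Fin.last n, π j = w} = Set.univ := by
  refine Set.eq_univ_iff_forall.2 fun w => ⟨π.symm w, Fin.le_last _, π.apply_symm_apply w⟩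

lemma prefix_castSucc [DecidableEq V] {n : ℕ} (v : V) (π' : Fin n ≃ {u : V // u ≠ v})
    (i : Fin (n + 1)) (hi : i ≠ Fin.last n) :
    {w | ∃ j ≤ i, (extE v π'.symm).symm j = w} =
      Subtype.val '' {w' | ∃ j ≤ i.castPred hi, π' j = w'} := by
  ext w
  simp only [Set.mem_setOf_eq, Set.mem_image]
  constructor
  · rintro ⟨j, hj, rfl⟩
    have hjne : j ≠ Fin.last n := by
      rintro rfl
      exact hi (le_antisymm (Fin.le_last i) hj)
    refine ⟨π' (j.castPred hjne), ⟨j.castPred hjne, ?_, rfl⟩, ?_⟩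
    · rw [← Fin.castSucc_le_castSucc_iff, Fin.castSucc_castPred, Fin.castSucc_castPred]
      exact hj
    · rw [extE_symm_ne _ _ hjne, Equiv.symm_symm]
  · rintro ⟨w', ⟨j', hj', rfl⟩, rfl⟩
    refine ⟨j'.castSucc, ?_, ?_⟩
    · rw [← Fin.castSucc_castPred i hi, Fin.castSucc_le_castSucc_iff]
      exact hj'
    · rw [extE_symm_ne _ _ (Fin.castSucc_lt_last j').ne, Fin.castPred_castSucc,
        Equiv.symm_symm]

lemma count_image (G : SimpleGraph V) (v : V) (S : Set {u : V // u ≠ v}) :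
    inducedEdgeCount G (Subtype.val '' S) =
      inducedEdgeCount (SimpleGraph.comap Subtype.val G) S := by
  rw [inducedEdgeCount, inducedEdgeCount]
  have hmem : ∀ e' : Sym2 {u : V // u ≠ v}, e' ∈ (SimpleGraph.comap Subtype.val G).edgeSet →
      Sym2.map Subtype.val e' ∈ G.edgeSet := by
    intro e'
    induction e' using Sym2.ind with
    | _ a b =>
      intro h1
      rw [Sym2.map_pair_eq]
      exact h1
  have himg : ∀ e' : Sym2 {u : V // u ≠ v}, (∀ x ∈ e', x ∈ S) →
      ∀ y ∈ Sym2.map Subtype.val e', y ∈ Subtype.val '' S := by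
    intro e' h2 y hy
    obtain ⟨a, ha, rfl⟩ := Sym2.mem_map.1 hy
    exact ⟨a, h2 a ha, rfl⟩
  refine (Nat.card_congr (Equiv.ofBijective
    (fun x => ⟨Sym2.map Subtype.val x.1, hmem _ x.2.1, himg _ x.2.2⟩) ⟨?_, ?_⟩)).symm
  · rintro ⟨e1, h1⟩ ⟨e2, h2⟩ h
    simp only [Subtype.mk.injEq] at h
    exact Subtype.ext (Sym2.map.injective Subtype.val_injective h)
  · rintro ⟨e, he, hx⟩
    revert he hx
    induction e using Sym2.ind with
    | _ a b =>
      intro he hx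
      obtain ⟨a', ha', hav⟩ := hx a (Sym2.mem_mk_left a b)
      obtain ⟨b', hb', hbv⟩ := hx b (Sym2.mem_mk_right a b)
      subst hav hbv
      refine ⟨⟨s(a', b'), he, ?_⟩, Subtype.ext (Sym2.map_pair_eq _ _ _)⟩
      intro x hxm
      rcases Sym2.mem_iff.1 hxm with rfl | rfl
      · exact ha'
      · exact hb'

lemma eta_step [Fintype V] [DecidableEq V] (G : SimpleGraph V) (n : ℕ)
    (he : Even (inducedEdgeCount G Set.univ)) :
    ∑ v : V, etaN {u : V // u ≠ v} (SimpleGraph.comap Subtype.val G) n ≤ etaN V G (n + 1) := by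
  rw [etaN, show (∑ v : V, etaN {u : V // u ≠ v} (SimpleGraph.comap Subtype.val G) n) =
    Nat.card (Σ v : V, {π' : Fin n ≃ {u : V // u ≠ v} //
      ∀ i, Even (inducedEdgeCount (SimpleGraph.comap Subtype.val G)
        {w' | ∃ j ≤ i, π' j = w'})}) from (nat_card_sigma _).symm]
  refine Nat.card_le_card_of_injective (fun x => ⟨(extE x.1 x.2.1.symm).symm, fun i => ?_⟩) ?_
  · by_cases hi : i = Fin.last n
    · subst hi
      rw [prefix_last]
      exact he
    · rw [prefix_castSucc x.1 x.2.1 i hi, count_image]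
      exact x.2.2 (i.castPred hi)
  · rintro ⟨v, π', h⟩ ⟨w, ρ, h2⟩ hEq
    simp only [Subtype.mk.injEq] at hEq
    have h3 : extE v π'.symm = extE w ρ.symm := by
      rw [← Equiv.symm_symm (extE v π'.symm), hEq, Equiv.symm_symm]
    have h4 := extE_bij.1 (a₁ := ⟨v, π'.symm⟩) (a₂ := ⟨w, ρ.symm⟩) h3
    injection h4 with h4a h4b
    subst h4a
    have h5 : π' = ρ := by
      have h6 := eq_of_heq h4b
      rw [← Equiv.symm_symm π', h6, Equiv.symm_symm]
    subst h5
    rfl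

lemma key (n : ℕ) : ∀ (V : Type u) [Fintype V] [DecidableEq V] (G : SimpleGraph V)
    (D : V → V → Prop), Fintype.card V = n → IsOrientation G D →
    (SS V D n).natAbs ≤ etaN V G n := by
  induction n with
  | zero =>
    intro V _ _ G D hc hD
    haveI hVempty : IsEmpty V := Fintype.card_eq_zero_iff.1 hc
    let e0 : V ≃ Fin 0 := Equiv.equivOfIsEmpty V (Fin 0)
    haveI : Unique (V ≃ Fin 0) := ⟨⟨e0⟩, fun σ => by
      ext x
      exact (hVempty.false x).elim⟩
    have h2 : (SS V D 0).natAbs = 1 := by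
      rw [SS, Fintype.sum_unique]
      simp [Int.natAbs_pow]
    rw [h2]
    have : Nonempty {π : Fin 0 ≃ V // ∀ i, Even (inducedEdgeCount G {v | ∃ j ≤ i, π j = v})} :=
      ⟨⟨e0.symm, fun i => i.elim0⟩⟩
    exact Nat.card_pos
  | succ n ih =>
    intro V _ _ G D hc hD
    rcases Nat.even_or_odd (inducedEdgeCount G Set.univ) with he | ho
    · calc (SS V D (n + 1)).natAbs
          ≤ ∑ v : V, ((-1 : ℤ) ^ (Nat.card {u : V // D v u})
              * SS {u : V // u ≠ v} (fun a b => D a.1 b.1) n).natAbs := by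
            rw [SS_succ hD n]
            exact natAbs_sum_le _ _
      _ = ∑ v : V, (SS {u : V // u ≠ v} (fun a b => D a.1 b.1) n).natAbs := by
            refine Finset.sum_congr rfl fun v _ => ?_
            rw [Int.natAbs_mul]
            simp [Int.natAbs_pow]
      _ ≤ ∑ v : V, etaN {u : V // u ≠ v} (SimpleGraph.comap Subtype.val G) n := by
            refine Finset.sum_le_sum fun v _ => ?_
            refine ih {u : V // u ≠ v} (SimpleGraph.comap Subtype.val G)
              (fun a b => D a.1 b.1) ?_ ⟨fun a b hab => hD.1 _ _ hab,
                fun a b hadj => hD.2 a.1 b.1 hadj⟩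
            have hcongr : Fintype.card {u : V // u ≠ v} = Fintype.card {u : V // ¬ u = v} :=
              Fintype.card_congr (Equiv.subtypeEquivRight fun _ => Iff.rfl)
            rw [hcongr, Fintype.card_subtype_compl, Fintype.card_subtype_eq, hc]
            omega
      _ ≤ etaN V G (n + 1) := eta_step G n he
    · rw [SS_eq_zero hD ho]
      exact Nat.zero_le _

end Stmt10Aux

theorem stmt10 {V : Type*} [Fintype V] [DecidableEq V] (G : SimpleGraph V)
    (D : V → V → Prop) (hD : IsOrientation G D) :
    ((eulerianPoly V D).eval (-1)).natAbs ≤ eta V G := by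
  have h1 : (eulerianPoly V D).eval (-1) = Stmt10Aux.SS V D (Fintype.card V) := by
    rw [eulerianPoly, Stmt10Aux.SS, Polynomial.eval_finset_sum]
    simp only [Polynomial.eval_pow, Polynomial.eval_X]
    rfl
  have h2 : eta V G = Stmt10Aux.etaN V G (Fintype.card V) := rfl
  rw [h1, h2]
  exact Stmt10Aux.key (Fintype.card V) V G D rfl hD
end

section
/- If G is a bipartite graph, then ν(G) = η(G); i.e., for any orientation D of G, |A_D(−1)| equals the number of even sequences of G. -/
open Polynomial

/-! ### Auxiliary counting lemmas -/

lemma card_split' {α : Type*} [Fintype α] (P Q : α → Prop) :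
    Nat.card {x // P x} = Nat.card {x // P x ∧ Q x} + Nat.card {x // P x ∧ ¬ Q x} := by
  classical
  simp only [Nat.card_eq_fintype_card, Fintype.card_subtype]
  rw [← Finset.filter_filter P Q, ← Finset.filter_filter P (fun x => ¬ Q x),
    Finset.card_filter_add_card_filter_not Q]

lemma nat_card_sigma {ι : Type*} [Fintype ι] (T : ι → Type*) [∀ i, Fintype (T i)] :
    Nat.card (Σ i, T i) = ∑ i, Nat.card (T i) := by
  simp [Nat.card_eq_fintype_card, Fintype.card_sigma]

/-- subtype of a sigma vs. sigma of subtypes -/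
def sigmaSubtype {ι : Type*} {β : ι → Type*} (P : ∀ i, β i → Prop) :
    {x : Σ i, β i // P x.1 x.2} ≃ Σ i, {b : β i // P i b} where
  toFun x := ⟨x.1.1, x.1.2, x.2⟩
  invFun y := ⟨⟨y.1, y.2.1⟩, y.2.2⟩
  left_inv := fun ⟨⟨_, _⟩, _⟩ => rfl
  right_inv := fun ⟨_, _, _⟩ => rfl

def symmEquiv (α β : Type*) : (α ≃ β) ≃ (β ≃ α) where
  toFun := Equiv.symm
  invFun := Equiv.symm
  left_inv := fun e => by simp
  right_inv := fun e => by simp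

lemma card_swap {V : Type*} {k : ℕ} (σ : V ≃ Fin k) (P Q : V × V → Prop)
    (hPQ : ∀ p, P p → Q p.swap) (hQP : ∀ p, Q p → P p.swap)
    (hQ : ∀ p, Q p → p.1 ≠ p.2) :
    Nat.card {p : V × V // P p ∧ σ p.2 < σ p.1} =
      Nat.card {p : V × V // Q p ∧ ¬ σ p.2 < σ p.1} := by
  refine Nat.card_congr {
    toFun := fun x => ⟨x.1.swap, hPQ _ x.2.1, by
      have := x.2.2; simp only [Prod.fst_swap, Prod.snd_swap]; omega⟩
    invFun := fun y => ⟨y.1.swap, hQP _ y.2.1, by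
      have h1 := y.2.2
      have h2 : σ y.1.1 ≠ σ y.1.2 := fun h => hQ _ y.2.1 (σ.injective h)
      simp only [Prod.fst_swap, Prod.snd_swap]
      omega⟩
    left_inv := fun x => by ext : 2 <;> simp
    right_inv := fun y => by ext : 2 <;> simp }

lemma pow_neg_one_congr {a b : ℕ} (h : Even (a + b)) : ((-1 : ℤ)) ^ a = (-1) ^ b := by
  have hiff := Nat.even_add.mp h
  by_cases ha : Even a
  · rw [Even.neg_one_pow ha, Even.neg_one_pow (hiff.mp ha)]
  · rw [Odd.neg_one_pow (Nat.not_even_iff_odd.mp ha),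
      Odd.neg_one_pow (Nat.not_even_iff_odd.mp (fun hb => ha (hiff.mpr hb)))]

/-! ### The extension equivalence -/

section Ext
variable {V : Type*} [DecidableEq V] {n : ℕ}

def extFun (v : V) (τ : {u : V // u ≠ v} ≃ Fin n) : V ≃ Fin (n + 1) where
  toFun u := if h : u = v then Fin.last n else (τ ⟨u, h⟩).castSucc
  invFun i := if h : i = Fin.last n then v else (τ.symm (i.castPred h)).1
  left_inv u := by
    by_cases h : u = v
    · simp [h]
    · dsimp only
      rw [dif_neg h, dif_neg (Fin.castSucc_lt_last _).ne, Fin.castPred_castSucc,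
        Equiv.symm_apply_apply]
  right_inv i := by
    by_cases h : i = Fin.last n
    · simp [h]
    · dsimp only
      rw [dif_neg h, dif_neg (τ.symm (i.castPred h)).2]
      simp [Fin.castSucc_castPred]

lemma extFun_apply_of_ne (v : V) (τ : {u : V // u ≠ v} ≃ Fin n) {u : V} (h : u ≠ v) :
    extFun v τ u = (τ ⟨u, h⟩).castSucc := dif_neg h

lemma extFun_apply_self (v : V) (τ : {u : V // u ≠ v} ≃ Fin n) :
    extFun v τ v = Fin.last n := dif_pos rfl

lemma extFun_symm_last (v : V) (τ : {u : V // u ≠ v} ≃ Fin n) :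
    (extFun v τ).symm (Fin.last n) = v := dif_pos rfl

lemma extFun_symm_castSucc (v : V) (τ : {u : V // u ≠ v} ≃ Fin n) (i : Fin n) :
    (extFun v τ).symm i.castSucc = (τ.symm i).1 := by
  show (if h : i.castSucc = Fin.last n then v else ((τ.symm (i.castSucc.castPred h)).1)) = _
  rw [dif_neg (Fin.castSucc_lt_last _).ne]
  simp [Fin.castPred_castSucc]

def fiberEquiv (v : V) : {σ : V ≃ Fin (n+1) // σ.symm (Fin.last n) = v} ≃
    ({u : V // u ≠ v} ≃ Fin n) where
  toFun x :=
    { toFun := fun u => (x.1 u.1).castPred (by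
        intro hlast
        exact u.2 (by rw [← Equiv.symm_apply_apply x.1 u.1, hlast, x.2]))
      invFun := fun i => ⟨x.1.symm i.castSucc, by
        intro hv
        exact (Fin.castSucc_lt_last i).ne (x.1.symm.injective (hv.trans x.2.symm))⟩
      left_inv := fun u => by
        ext
        simp [Fin.castSucc_castPred]
      right_inv := fun i => by simp }
  invFun τ := ⟨extFun v τ, extFun_symm_last v τ⟩
  left_inv x := by
    apply Subtype.ext
    apply Equiv.ext
    intro u
    by_cases h : u = v
    · subst h
      rw [extFun_apply_self]
      exact ((Equiv.apply_eq_iff_eq_symm_apply x.1).mpr x.2.symm).symm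
    · rw [extFun_apply_of_ne v _ h]
      simp [Fin.castSucc_castPred]
  right_inv τ := by
    apply Equiv.ext
    intro u
    apply Fin.ext
    dsimp only [Equiv.coe_fn_mk]
    rw [Fin.coe_castPred, extFun_apply_of_ne v τ u.2, Fin.coe_castSucc]

def Phi : (V ≃ Fin (n+1)) ≃ Σ v : V, ({u : V // u ≠ v} ≃ Fin n) :=
  ((Equiv.sigmaFiberEquiv (fun σ : V ≃ Fin (n+1) => σ.symm (Fin.last n))).symm).trans
    (Equiv.sigmaCongrRight fun v => fiberEquiv v)

lemma Phi_symm_apply (v : V) (τ : {u : V // u ≠ v} ≃ Fin n) :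
    Phi.symm ⟨v, τ⟩ = extFun v τ := rfl

end Ext

/-! ### Edge counting lemmas -/

section Edges
variable {W V : Type*}

lemma icount_image (G : SimpleGraph V) (f : W → V) (hf : Function.Injective f) (S : Set W) :
    inducedEdgeCount (G.comap f) S = inducedEdgeCount G (f '' S) := by
  have hmem : ∀ e : Sym2 W, e ∈ (G.comap f).edgeSet → Sym2.map f e ∈ G.edgeSet := by
    intro e
    induction e using Sym2.ind with
    | _ a b => intro h; rw [Sym2.map_pair_eq, SimpleGraph.mem_edgeSet]; exact h
  refine Nat.card_eq_of_bijective (fun e => ⟨Sym2.map f e.1, hmem e.1 e.2.1, ?_⟩) ⟨?_, ?_⟩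
  · intro x hx
    obtain ⟨a, ha, rfl⟩ := Sym2.mem_map.mp hx
    exact ⟨a, e.2.2 a ha, rfl⟩
  · intro e e' h
    exact Subtype.ext (Sym2.map.injective hf (congrArg Subtype.val h))
  · rintro ⟨e, he, hS⟩
    induction e using Sym2.ind with
    | _ x y =>
      obtain ⟨a, haS, hax⟩ := hS x (Sym2.mem_iff.mpr (Or.inl rfl))
      obtain ⟨b, hbS, hby⟩ := hS y (Sym2.mem_iff.mpr (Or.inr rfl))
      subst hax; subst hby
      refine ⟨⟨s(a, b), ?_, ?_⟩, ?_⟩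
      · exact SimpleGraph.mem_edgeSet _ |>.mpr (SimpleGraph.mem_edgeSet _ |>.mp he)
      · intro x hx
        rcases Sym2.mem_iff.mp hx with rfl | rfl
        · exact haS
        · exact hbS
      · exact Subtype.ext (Sym2.map_pair_eq f a b)

lemma icount_univ_split [Fintype V] [DecidableEq V] (G : SimpleGraph V) (v : V) :
    inducedEdgeCount G Set.univ
      = Nat.card {u : V // G.Adj v u} + inducedEdgeCount G {x : V | x ≠ v} := by
  have h0 : inducedEdgeCount G Set.univ = Nat.card {e : Sym2 V // e ∈ G.edgeSet} :=
    Nat.card_congr (Equiv.subtypeEquivRight (fun e => by simp))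
  rw [h0, card_split' (fun e : Sym2 V => e ∈ G.edgeSet) (fun e => v ∈ e)]
  congr 1
  · refine (Nat.card_eq_of_bijective
      (fun u : {u : V // G.Adj v u} => (⟨s(v, u.1), ?_, ?_⟩ :
        {e : Sym2 V // e ∈ G.edgeSet ∧ v ∈ e})) ⟨?_, ?_⟩).symm
    · exact SimpleGraph.mem_edgeSet _ |>.mpr u.2
    · exact Sym2.mem_iff.mpr (Or.inl rfl)
    · intro a b h
      have := congrArg Subtype.val h
      simp only at this
      exact Subtype.ext (Sym2.congr_right.mp this)
    · rintro ⟨e, he, hv⟩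
      induction e using Sym2.ind with
      | _ x y =>
        rcases Sym2.mem_iff.mp hv with rfl | rfl
        · exact ⟨⟨y, (SimpleGraph.mem_edgeSet _).mp he⟩, rfl⟩
        · refine ⟨⟨x, ((SimpleGraph.mem_edgeSet _).mp he).symm⟩, Subtype.ext ?_⟩
          exact Sym2.eq_swap
  · refine Nat.card_congr (Equiv.subtypeEquivRight (fun e => ?_))
    constructor
    · rintro ⟨he, hv⟩
      exact ⟨he, fun x hx hxv => hv (hxv ▸ hx)⟩
    · rintro ⟨he, hall⟩
      exact ⟨he, fun hv => hall v hv rfl⟩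

lemma val_image_univ (v : V) :
    (Subtype.val '' (Set.univ : Set {u : V // u ≠ v})) = {x : V | x ≠ v} := by
  ext x
  simp

end Edges

/-! ### Descents and signed sums -/

section Des
variable {V : Type*} [Fintype V] [DecidableEq V]

noncomputable def desK (D : V → V → Prop) {k : ℕ} (σ : V ≃ Fin k) : ℕ :=
  Nat.card {p : V × V // D p.1 p.2 ∧ σ p.2 < σ p.1}

noncomputable def Ssum (V : Type*) [Fintype V] [DecidableEq V]
    (D : V → V → Prop) (k : ℕ) : ℤ :=
  ∑ σ : V ≃ Fin k, (-1) ^ desK D σ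

lemma card_arcs {G : SimpleGraph V} {D : V → V → Prop} (hD : IsOrientation G D) :
    Nat.card {p : V × V // D p.1 p.2} = inducedEdgeCount G Set.univ := by
  refine Nat.card_eq_of_bijective
    (fun p => ⟨s(p.1.1, p.1.2), (SimpleGraph.mem_edgeSet _).mpr (hD.1 _ _ p.2),
      fun x _ => trivial⟩) ⟨?_, ?_⟩
  · rintro ⟨⟨a, b⟩, hab⟩ ⟨⟨c, d⟩, hcd⟩ h
    have h' := congrArg Subtype.val h
    simp only at h'
    rcases Sym2.eq_iff.mp h' with ⟨rfl, rfl⟩ | ⟨rfl, rfl⟩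
    · rfl
    · exact absurd hab ((hD.2 _ _ (hD.1 _ _ hcd)).mp hcd)
  · rintro ⟨e, he, -⟩
    induction e using Sym2.ind with
    | _ x y =>
      rw [SimpleGraph.mem_edgeSet] at he
      by_cases h : D x y
      · exact ⟨⟨(x, y), h⟩, rfl⟩
      · have hyx : D y x := (hD.2 y x he.symm).mpr h
        exact ⟨⟨(y, x), hyx⟩, Subtype.ext Sym2.eq_swap⟩

lemma desK_rev {G : SimpleGraph V} {D : V → V → Prop} (hD : IsOrientation G D)
    {k : ℕ} (σ : V ≃ Fin k) :
    desK D (σ.trans Fin.revPerm) + desK D σ = Nat.card {p : V × V // D p.1 p.2} := by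
  have h1 : desK D (σ.trans Fin.revPerm)
      = Nat.card {p : V × V // D p.1 p.2 ∧ ¬ σ p.2 < σ p.1} := by
    refine Nat.card_congr (Equiv.subtypeEquivRight (fun p => ?_))
    simp only [Equiv.trans_apply, Fin.revPerm_apply, Fin.rev_lt_rev]
    constructor
    · rintro ⟨hd, hlt⟩; exact ⟨hd, by omega⟩
    · rintro ⟨hd, hlt⟩
      refine ⟨hd, ?_⟩
      have hne : σ p.1 ≠ σ p.2 := fun h => (hD.1 _ _ hd).ne (σ.injective h)
      omega
  rw [h1, Nat.add_comm, card_split' (fun p : V × V => D p.1 p.2) (fun p => σ p.2 < σ p.1)]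
  rfl

def revEquiv (V : Type*) (k : ℕ) : (V ≃ Fin k) ≃ (V ≃ Fin k) where
  toFun σ := σ.trans Fin.revPerm
  invFun σ := σ.trans Fin.revPerm
  left_inv σ := by ext u; simp [Fin.rev_rev]
  right_inv σ := by ext u; simp [Fin.rev_rev]

lemma Ssum_eq_zero {G : SimpleGraph V} {D : V → V → Prop} (hD : IsOrientation G D)
    (k : ℕ) (hodd : Odd (inducedEdgeCount G Set.univ)) : Ssum V D k = 0 := by
  have key : ∀ σ : V ≃ Fin k,
      ((-1 : ℤ)) ^ desK D (σ.trans Fin.revPerm) = -((-1) ^ desK D σ) := by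
    intro σ
    have h := desK_rev hD σ
    rw [card_arcs hD] at h
    obtain ⟨m, hm⟩ := hodd
    have heven : Even (desK D (σ.trans Fin.revPerm) + (desK D σ + 1)) := ⟨m + 1, by omega⟩
    rw [pow_neg_one_congr heven, pow_succ, mul_comm, neg_one_mul]
  have h2 : Ssum V D k = - Ssum V D k := by
    conv_lhs => rw [Ssum, ← Equiv.sum_comp (revEquiv V k) (fun σ => ((-1 : ℤ)) ^ desK D σ)]
    simp only [revEquiv, Equiv.coe_fn_mk, key]
    rw [Finset.sum_neg_distrib]
    rfl
  linarith

lemma Ssum_compare {G : SimpleGraph V} {D D' : V → V → Prop}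
    (hD : IsOrientation G D) (hD' : IsOrientation G D') (k : ℕ) :
    Ssum V D k = (-1) ^ (Nat.card {p : V × V // D' p.1 p.2 ∧ ¬ D p.1 p.2}) * Ssum V D' k := by
  set d := Nat.card {p : V × V // D' p.1 p.2 ∧ ¬ D p.1 p.2} with hd
  have key : ∀ σ : V ≃ Fin k,
      ((-1 : ℤ)) ^ desK D σ = (-1) ^ d * (-1) ^ desK D' σ := by
    intro σ
    have e1 : desK D σ = Nat.card {p : V × V // (D p.1 p.2 ∧ D' p.1 p.2) ∧ σ p.2 < σ p.1}
        + Nat.card {p : V × V // (D p.1 p.2 ∧ ¬ D' p.1 p.2) ∧ σ p.2 < σ p.1} := by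
      rw [desK, card_split' (fun p : V × V => D p.1 p.2 ∧ σ p.2 < σ p.1)
        (fun p => D' p.1 p.2)]
      congr 1 <;> exact Nat.card_congr (Equiv.subtypeEquivRight (fun p => by tauto))
    have e2 : desK D' σ = Nat.card {p : V × V // (D p.1 p.2 ∧ D' p.1 p.2) ∧ σ p.2 < σ p.1}
        + Nat.card {p : V × V // (D' p.1 p.2 ∧ ¬ D p.1 p.2) ∧ σ p.2 < σ p.1} := by
      rw [desK, card_split' (fun p : V × V => D' p.1 p.2 ∧ σ p.2 < σ p.1)
        (fun p => D p.1 p.2)]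
      congr 1 <;> exact Nat.card_congr (Equiv.subtypeEquivRight (fun p => by tauto))
    have e3 : Nat.card {p : V × V // (D p.1 p.2 ∧ ¬ D' p.1 p.2) ∧ σ p.2 < σ p.1}
        = Nat.card {p : V × V // (D' p.1 p.2 ∧ ¬ D p.1 p.2) ∧ ¬ σ p.2 < σ p.1} := by
      refine card_swap σ _ _ ?_ ?_ ?_
      · rintro ⟨a, b⟩ ⟨hab, hnab⟩
        have hadj : G.Adj a b := hD.1 _ _ hab
        exact ⟨(hD'.2 b a hadj.symm).mpr hnab, fun h => ((hD.2 a b hadj).mp hab) h⟩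
      · rintro ⟨a, b⟩ ⟨hab, hnab⟩
        have hadj : G.Adj a b := hD'.1 _ _ hab
        exact ⟨(hD.2 b a hadj.symm).mpr hnab, fun h => ((hD'.2 a b hadj).mp hab) h⟩
      · rintro ⟨a, b⟩ ⟨hab, -⟩
        exact (hD'.1 _ _ hab).ne
    have e4 : d = Nat.card {p : V × V // (D' p.1 p.2 ∧ ¬ D p.1 p.2) ∧ σ p.2 < σ p.1}
        + Nat.card {p : V × V // (D' p.1 p.2 ∧ ¬ D p.1 p.2) ∧ ¬ σ p.2 < σ p.1} := by
      rw [hd, card_split' (fun p : V × V => D' p.1 p.2 ∧ ¬ D p.1 p.2)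
        (fun p => σ p.2 < σ p.1)]
    have hsum : desK D σ + desK D' σ
        = 2 * Nat.card {p : V × V // (D p.1 p.2 ∧ D' p.1 p.2) ∧ σ p.2 < σ p.1} + d := by
      omega
    have heven : Even (desK D σ + (d + desK D' σ)) := by
      obtain ⟨X, hX⟩ : ∃ X, desK D σ + desK D' σ = 2 * X + d := ⟨_, hsum⟩
      exact ⟨X + d, by omega⟩
    rw [pow_neg_one_congr heven, pow_add]
  rw [Ssum, Ssum, Finset.mul_sum]
  exact Finset.sum_congr rfl (fun σ _ => key σ)

end Des


/-! ### Decomposition of descents along the extension -/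

section Step
variable {V : Type*} [Fintype V] [DecidableEq V] {n : ℕ}

lemma sum_ext {M : Type*} [AddCommMonoid M] (f : (V ≃ Fin (n+1)) → M) :
    ∑ σ : V ≃ Fin (n+1), f σ
      = ∑ v : V, ∑ τ : {u : V // u ≠ v} ≃ Fin n, f (extFun v τ) := by
  rw [← Equiv.sum_comp (Phi (V := V) (n := n)).symm f]
  simp only [← Phi_symm_apply]
  refine Eq.trans ?_ (Finset.sum_sigma Finset.univ (fun v => Finset.univ)
    (fun x => f (Phi.symm x)))
  rfl

lemma desK_ext (D : V → V → Prop) (hne : ∀ a b, D a b → a ≠ b) (v : V)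
    (τ : {u : V // u ≠ v} ≃ Fin n) :
    desK D (extFun v τ)
      = Nat.card {u : V // D v u}
        + desK (fun a b : {u : V // u ≠ v} => D a.1 b.1) τ := by
  rw [desK, card_split' (fun p : V × V => D p.1 p.2 ∧ extFun v τ p.2 < extFun v τ p.1)
    (fun p => p.1 = v)]
  congr 1
  · refine Nat.card_congr {
      toFun := fun x => ⟨x.1.2, by
        have h := x.2.1.1; rw [x.2.2] at h; exact h⟩
      invFun := fun u => ⟨(v, u.1), ⟨⟨u.2, by
        rw [extFun_apply_self, extFun_apply_of_ne v τ (hne v u.1 u.2).symm]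
        exact Fin.castSucc_lt_last _⟩, rfl⟩⟩
      left_inv := fun x => by
        apply Subtype.ext
        obtain ⟨⟨a, b⟩, ⟨hD, hlt⟩, h1⟩ := x
        simp only at h1 ⊢
        rw [h1]
      right_inv := fun u => rfl }
  · have hlt_iff : ∀ (a b : V) (ha : a ≠ v) (hb : b ≠ v),
        (extFun v τ b < extFun v τ a ↔ τ ⟨b, hb⟩ < τ ⟨a, ha⟩) := by
      intro a b ha hb
      rw [extFun_apply_of_ne v τ ha, extFun_apply_of_ne v τ hb,
        Fin.castSucc_lt_castSucc_iff]
    have hbne : ∀ (a b : V), extFun v τ b < extFun v τ a → b ≠ v := by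
      intro a b hlt h2
      rw [h2, extFun_apply_self] at hlt
      exact absurd hlt (Fin.not_lt.mpr (Fin.le_last _))
    refine Nat.card_congr {
      toFun := fun x =>
        ⟨(⟨x.1.1, x.2.2⟩, ⟨x.1.2, hbne _ _ x.2.1.2⟩), x.2.1.1,
          (hlt_iff x.1.1 x.1.2 x.2.2 (hbne _ _ x.2.1.2)).mp x.2.1.2⟩
      invFun := fun q =>
        ⟨(q.1.1.1, q.1.2.1), ⟨⟨q.2.1,
          (hlt_iff q.1.1.1 q.1.2.1 q.1.1.2 q.1.2.2).mpr q.2.2⟩, q.1.1.2⟩⟩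
      left_inv := fun x => rfl
      right_inv := fun q => rfl }
end Step

/-! ### Eta counting -/

noncomputable def etaK (V : Type*) (G : SimpleGraph V) (k : ℕ) : ℕ :=
  Nat.card {π : Fin k ≃ V // ∀ i, Even (inducedEdgeCount G {v | ∃ j ≤ i, π j = v})}

lemma prefix_top {V : Type*} {k : ℕ} (π : Fin (k+1) ≃ V) :
    {w | ∃ j ≤ Fin.last k, π j = w} = Set.univ := by
  ext w
  simp only [Set.mem_setOf_eq, Set.mem_univ, iff_true]
  exact ⟨π.symm w, Fin.le_last _, π.apply_symm_apply w⟩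

lemma etaK_zero {V : Type*} [Fintype V] (G : SimpleGraph V) (k : ℕ)
    (h : ¬ Even (inducedEdgeCount G Set.univ)) : etaK V G k = 0 := by
  rw [etaK, Nat.card_eq_zero]
  refine Or.inl ⟨?_⟩
  rintro ⟨π, hπ⟩
  cases k with
  | zero =>
    haveI hVempty : IsEmpty V := Equiv.isEmpty π.symm
    apply h
    haveI : IsEmpty {e : Sym2 V // e ∈ G.edgeSet ∧ ∀ x ∈ e, x ∈ (Set.univ : Set V)} := by
      constructor
      rintro ⟨e, -, -⟩
      induction e using Sym2.ind with
      | _ x y => exact hVempty.false x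
    rw [inducedEdgeCount, Nat.card_of_isEmpty]
    exact Even.zero
  | succ m =>
    apply h
    have hlast := hπ (Fin.last m)
    rwa [prefix_top] at hlast

section EtaRec
variable {V : Type*} [Fintype V] [DecidableEq V] {n : ℕ}

lemma prefix_castSucc (v : V) (τ : {u : V // u ≠ v} ≃ Fin n) (i : Fin n) :
    {w | ∃ j ≤ i.castSucc, (extFun v τ).symm j = w}
      = Subtype.val '' {w' | ∃ j ≤ i, τ.symm j = w'} := by
  ext w
  simp only [Set.mem_setOf_eq, Set.mem_image]
  constructor
  · rintro ⟨j, hj, rfl⟩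
    have hne : j ≠ Fin.last n := (lt_of_le_of_lt hj (Fin.castSucc_lt_last i)).ne
    refine ⟨τ.symm (j.castPred hne), ⟨j.castPred hne, ?_, rfl⟩, ?_⟩
    · rwa [← Fin.castSucc_le_castSucc_iff, Fin.castSucc_castPred]
    · rw [← extFun_symm_castSucc v τ, Fin.castSucc_castPred]
  · rintro ⟨w', ⟨j, hj, rfl⟩, rfl⟩
    exact ⟨j.castSucc, Fin.castSucc_le_castSucc_iff.mpr hj, extFun_symm_castSucc v τ j⟩

lemma cond_ext (G : SimpleGraph V) (hE : Even (inducedEdgeCount G Set.univ))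
    (v : V) (τ : {u : V // u ≠ v} ≃ Fin n) :
    (∀ i, Even (inducedEdgeCount G {w | ∃ j ≤ i, (extFun v τ).symm j = w}))
      ↔ ∀ i, Even (inducedEdgeCount (G.comap (Subtype.val : {u : V // u ≠ v} → V))
          {w | ∃ j ≤ i, τ.symm j = w}) := by
  constructor
  · intro h i
    have h2 := h i.castSucc
    rw [prefix_castSucc v τ i] at h2
    rwa [icount_image G _ Subtype.val_injective]
  · intro h i
    refine Fin.lastCases ?_ ?_ i
    · rw [prefix_top]
      exact hE
    · intro i'
      rw [prefix_castSucc v τ i', ← icount_image G _ Subtype.val_injective]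
      exact h i'

lemma etaK_rec (G : SimpleGraph V) (hE : Even (inducedEdgeCount G Set.univ)) :
    etaK V G (n+1) = ∑ v : V, etaK {u : V // u ≠ v} (G.comap Subtype.val) n := by
  classical
  have e1 : {π : Fin (n+1) ≃ V // ∀ i, Even (inducedEdgeCount G {w | ∃ j ≤ i, π j = w})}
      ≃ {σ : V ≃ Fin (n+1) //
          ∀ i, Even (inducedEdgeCount G {w | ∃ j ≤ i, σ.symm j = w})} :=
    Equiv.subtypeEquiv (symmEquiv (Fin (n+1)) V) (fun π => by
      simp only [symmEquiv, Equiv.coe_fn_mk, Equiv.symm_symm])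
  have e2 : {σ : V ≃ Fin (n+1) //
          ∀ i, Even (inducedEdgeCount G {w | ∃ j ≤ i, σ.symm j = w})}
      ≃ {x : Σ v : V, ({u : V // u ≠ v} ≃ Fin n) //
          ∀ i, Even (inducedEdgeCount G {w | ∃ j ≤ i, (extFun x.1 x.2).symm j = w})} :=
    Equiv.subtypeEquiv Phi (fun σ => by
      have hx : extFun (Phi σ).1 (Phi σ).2 = σ :=
        (Phi_symm_apply _ _).symm.trans (Phi.symm_apply_apply σ)
      rw [hx])
  have e3 := sigmaSubtype (fun (v : V) (τ : {u : V // u ≠ v} ≃ Fin n) =>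
    ∀ i, Even (inducedEdgeCount G {w | ∃ j ≤ i, (extFun v τ).symm j = w}))
  have e4 : ∀ v : V, {τ : {u : V // u ≠ v} ≃ Fin n //
        ∀ i, Even (inducedEdgeCount G {w | ∃ j ≤ i, (extFun v τ).symm j = w})}
      ≃ {π' : Fin n ≃ {u : V // u ≠ v} //
        ∀ i, Even (inducedEdgeCount (G.comap (Subtype.val : {u : V // u ≠ v} → V))
          {w | ∃ j ≤ i, π' j = w})} := fun v =>
    Equiv.subtypeEquiv (symmEquiv _ _) (fun τ => by
      simp only [symmEquiv, Equiv.coe_fn_mk]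
      exact cond_ext G hE v τ)
  have equiv := (e1.trans (e2.trans (e3.trans (Equiv.sigmaCongrRight e4))))
  rw [etaK, Nat.card_congr equiv]
  letI : ∀ v : V, Fintype {π' : Fin n ≃ {u : V // u ≠ v} //
      ∀ i, Even (inducedEdgeCount (G.comap (Subtype.val : {u : V // u ≠ v} → V))
        {w | ∃ j ≤ i, π' j = w})} := fun v => Fintype.ofFinite _
  rw [nat_card_sigma]
  rfl

end EtaRec

lemma orient_col {V : Type*} (G : SimpleGraph V) (c : V → Prop)
    (hc : ∀ u w, G.Adj u w → (c u ↔ ¬ c w)) :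
    IsOrientation G (fun a b => G.Adj a b ∧ c a) := by
  refine ⟨fun u v h => h.1, fun u v hadj => ?_⟩
  constructor
  · rintro ⟨-, hcu⟩ ⟨-, hcv⟩
    exact (hc u v hadj).mp hcu hcv
  · intro h
    refine ⟨hadj, ?_⟩
    by_contra hcu
    have hcv : c v := by
      by_contra hcv
      exact hcu ((hc u v hadj).mpr hcv)
    exact h ⟨hadj.symm, hcv⟩

/-! ### The main induction -/

lemma main_ind (n : ℕ) : ∀ (V : Type u) [Fintype V] [DecidableEq V]
    (G : SimpleGraph V) (c : V → Prop), Fintype.card V = n →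
    (∀ u w, G.Adj u w → (c u ↔ ¬ c w)) →
    Ssum V (fun a b => G.Adj a b ∧ c a) n = (etaK V G n : ℤ) := by
  induction n with
  | zero =>
    intro V _ _ G c hcard hc
    haveI hVempty : IsEmpty V := Fintype.card_eq_zero_iff.mp hcard
    haveI : Unique (V ≃ Fin 0) :=
      { default := Equiv.equivOfIsEmpty V (Fin 0)
        uniq := fun e => by ext u; exact (hVempty.false u).elim }
    have h1 : Ssum V (fun a b => G.Adj a b ∧ c a) 0 = 1 := by
      rw [Ssum, Fintype.sum_unique]
      have h0 : desK (fun a b => G.Adj a b ∧ c a) (default : V ≃ Fin 0) = 0 :=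
        Nat.card_of_isEmpty
      rw [h0, pow_zero]
    have h2 : etaK V G 0 = 1 := by
      rw [etaK]
      haveI : Unique (Fin 0 ≃ V) :=
        { default := Equiv.equivOfIsEmpty _ _
          uniq := fun e => by ext i; exact i.elim0 }
      haveI : Unique {π : Fin 0 ≃ V //
          ∀ i, Even (inducedEdgeCount G {v | ∃ j ≤ i, π j = v})} :=
        { default := ⟨default, fun i => i.elim0⟩
          uniq := fun x => Subtype.ext (Unique.uniq _ x.1) }
      rw [Nat.card_unique]
    rw [h1, h2]
    norm_num
  | succ n IH =>
    intro V _ _ G c hcard hc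
    set D : V → V → Prop := fun a b => G.Adj a b ∧ c a with hDdef
    have horient : IsOrientation G D := orient_col G c hc
    by_cases hE : Even (inducedEdgeCount G Set.univ)
    · -- even number of edges: use the recursions
      have key : ∀ v : V,
          ((-1 : ℤ)) ^ (Nat.card {u : V // D v u})
              * (etaK {u : V // u ≠ v} (G.comap Subtype.val) n : ℤ)
            = (etaK {u : V // u ≠ v} (G.comap Subtype.val) n : ℤ) := by
        intro v
        by_cases hcv : c v
        · have hcount : Nat.card {u : V // D v u} = Nat.card {u : V // G.Adj v u} :=
            Nat.card_congr (Equiv.subtypeEquivRight (fun u => by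
              simp only [hDdef]
              exact ⟨fun h => h.1, fun h => ⟨h, hcv⟩⟩))
          by_cases hdv : Even (Nat.card {u : V // G.Adj v u})
          · rw [hcount, Even.neg_one_pow hdv, one_mul]
          · have hsplit := icount_univ_split G v
            have him : inducedEdgeCount (G.comap (Subtype.val : {u : V // u ≠ v} → V))
                Set.univ = inducedEdgeCount G {x : V | x ≠ v} := by
              rw [icount_image _ _ Subtype.val_injective, val_image_univ]
            have hodd : ¬ Even (inducedEdgeCount
                (G.comap (Subtype.val : {u : V // u ≠ v} → V)) Set.univ) := by
              rw [him]
              intro hcon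
              apply hdv
              rw [hsplit] at hE
              rcases Nat.even_add.mp hE with hiff
              exact hiff.mpr hcon
            rw [etaK_zero _ _ hodd]
            norm_num
        · have hcount : Nat.card {u : V // D v u} = 0 := by
            haveI : IsEmpty {u : V // D v u} := ⟨fun u => hcv u.2.2⟩
            exact Nat.card_of_isEmpty
          rw [hcount, pow_zero, one_mul]
      have hcard' : ∀ v : V, Fintype.card {u : V // u ≠ v} = n := by
        intro v
        have hcompl := Fintype.card_subtype_compl (fun u : V => u = v)
        rw [Fintype.card_subtype_eq, hcard] at hcompl
        simpa using hcompl
      calc Ssum V D (n+1)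
          = ∑ v : V, ∑ τ : {u : V // u ≠ v} ≃ Fin n, ((-1 : ℤ)) ^ desK D (extFun v τ) :=
            sum_ext _
        _ = ∑ v : V, ((-1 : ℤ)) ^ (Nat.card {u : V // D v u})
              * Ssum {u : V // u ≠ v} (fun a b => D a.1 b.1) n := by
            refine Finset.sum_congr rfl (fun v _ => ?_)
            rw [Ssum, Finset.mul_sum]
            refine Finset.sum_congr rfl (fun τ _ => ?_)
            rw [desK_ext D (fun a b h => h.1.ne) v τ, pow_add]
        _ = ∑ v : V, ((-1 : ℤ)) ^ (Nat.card {u : V // D v u})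
              * (etaK {u : V // u ≠ v} (G.comap Subtype.val) n : ℤ) := by
            refine Finset.sum_congr rfl (fun v _ => ?_)
            congr 1
            exact IH {u : V // u ≠ v} (G.comap Subtype.val) (fun u => c u.1)
              (hcard' v) (fun a b h => hc a.1 b.1 h)
        _ = ∑ v : V, (etaK {u : V // u ≠ v} (G.comap Subtype.val) n : ℤ) :=
            Finset.sum_congr rfl (fun v _ => key v)
        _ = (etaK V G (n+1) : ℤ) := by
            rw [etaK_rec G hE]
            push_cast
            rfl
    · -- odd number of edges: both sides vanish
      rw [Ssum_eq_zero horient _ (Nat.not_even_iff_odd.mp hE), etaK_zero _ _ hE]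
      norm_num

theorem stmt12 {V : Type*} [Fintype V] [DecidableEq V] (G : SimpleGraph V)
    (hbip : G.Colorable 2) (D : V → V → Prop) (hD : IsOrientation G D) :
    ((eulerianPoly V D).eval (-1)).natAbs = eta V G := by
  classical
  obtain ⟨C⟩ := hbip
  set c : V → Prop := fun v => C v = 0 with hcdef
  have hc : ∀ u w, G.Adj u w → (c u ↔ ¬ c w) := by
    intro u w h
    have hne := C.valid h
    have h2 : ∀ x : Fin 2, x = 0 ∨ x = 1 := by decide
    simp only [hcdef]
    rcases h2 (C u) with hu | hu <;> rcases h2 (C w) with hw | hw <;>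
      simp [hu, hw] at hne ⊢
  have horient : IsOrientation G (fun a b => G.Adj a b ∧ c a) := orient_col G c hc
  have hcomp := Ssum_compare hD horient (Fintype.card V)
  have hmain := main_ind (Fintype.card V) V G c rfl hc
  have heval : (eulerianPoly V D).eval (-1) = Ssum V D (Fintype.card V) := by
    rw [eulerianPoly, Polynomial.eval_finset_sum]
    simp only [Polynomial.eval_pow, Polynomial.eval_X]
    rfl
  have heta : eta V G = etaK V G (Fintype.card V) := rfl
  rw [heval, hcomp, hmain, Int.natAbs_mul, Int.natAbs_pow]
  simp only [Int.natAbs_neg, Int.natAbs_one, one_pow, one_mul, Int.natAbs_natCast]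
  exact heta.symm
end

section
/- Let G be a complete multipartite graph with parts V_1,…,V_r. If at least two of the parts have odd size, then G has no even sequences, i.e., η(G) = 0. -/
/-!
Adding a vertex `v` to a prefix `S` of an even sequence adds the edges from `v` to
`S \ V_a`, where `V_a` is the part of `v`; so `|S|` and `|S ∩ V_a|` have the same parity.
Hence the number of parts meeting the prefix in an odd number of vertices flips between
`0` and `1` at every step: it always equals `|S| mod 2 ≤ 1`. For the whole vertex set
this number counts the odd parts, and two of them give a contradiction.
-/

open Finset

namespace SimpleGraph

variable {V : Type*} (G : SimpleGraph V) [DecidableRel G.Adj]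

lemma inducedEdgeCount_coe_finset (s : Finset V) :
    inducedEdgeCount G ↑s = #{e ∈ s.sym2 | e ∈ G.edgeSet} := by
  rw [inducedEdgeCount, ← Set.ncard_coe_finset, ← Nat.card_coe_set_eq]
  congr! 2
  ext e
  simp [and_comm]

lemma inducedEdgeCount_insert [DecidableEq V] {s : Finset V} {v : V} (hv : v ∉ s) :
    inducedEdgeCount G ↑(insert v s) = inducedEdgeCount G ↑s + #{u ∈ s | G.Adj v u} := by
  have hnew : {e ∈ (insert v s).image (s(v, ·)) | e ∈ G.edgeSet} =
      {u ∈ s | G.Adj v u}.image (s(v, ·)) := by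
    ext e
    simp only [mem_filter, mem_image, mem_insert]
    constructor
    · rintro ⟨⟨u, rfl | hu, rfl⟩, hvu⟩
      · exact absurd hvu (by simp)
      · exact ⟨u, ⟨hu, hvu⟩, rfl⟩
    · rintro ⟨u, ⟨hu, hvu⟩, rfl⟩
      exact ⟨⟨u, Or.inr hu, rfl⟩, hvu⟩
  have hdisj : Disjoint ({u ∈ s | G.Adj v u}.image (s(v, ·))) {e ∈ s.sym2 | e ∈ G.edgeSet} := by
    simp only [Finset.disjoint_left, mem_image, mem_filter]
    rintro _ ⟨u, -, rfl⟩ ⟨hvs, -⟩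
    exact hv (mk_mem_sym2_iff.mp hvs).1
  rw [inducedEdgeCount_coe_finset, inducedEdgeCount_coe_finset, sym2_insert, filter_union, hnew,
    card_union_of_disjoint hdisj, card_image_of_injective _ (fun _ _ => Sym2.congr_right.mp),
    add_comm]

end SimpleGraph

section OddParts

variable {V ι : Type*} [Fintype ι] [DecidableEq ι] (f : V → ι)

def oddParts (s : Finset V) : Finset ι := {a | Odd #{v ∈ s | f v = a}}

variable {f} [DecidableEq V] {s : Finset V} {v : V}

lemma mem_oddParts_insert (hv : v ∉ s) (a : ι) :
    a ∈ oddParts f (insert v s) ↔ (a ∈ oddParts f s ↔ a ≠ f v) := by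
  simp only [oddParts, mem_filter, mem_univ, true_and, filter_insert]
  split_ifs with h
  · rw [card_insert_of_notMem (by simp [hv]), Nat.odd_add_one, ← h]
    tauto
  · tauto

lemma card_oddParts_insert (hv : v ∉ s) (hs : #(oddParts f s) = #s % 2)
    (hvs : Even #{u ∈ s | f u ≠ f v}) :
    #(oddParts f (insert v s)) = #(insert v s) % 2 := by
  have hsplit := card_filter_add_card_filter_not (s := s) (fun u => f u = f v)
  have hmem : f v ∈ oddParts f s ↔ Odd #s := by
    simp only [oddParts, mem_filter, mem_univ, true_and, ← hsplit]
    exact (Nat.odd_add.trans (iff_true_right hvs)).symm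
  rw [card_insert_of_notMem hv]
  by_cases h : f v ∈ oddParts f s
  · have hins : oddParts f (insert v s) = (oddParts f s).erase (f v) := by
      ext a; rw [mem_oddParts_insert hv, mem_erase]; by_cases a = f v <;> simp_all
    have hodd := Nat.odd_iff.mp (hmem.mp h)
    rw [hins, card_erase_of_mem h]
    omega
  · have hins : oddParts f (insert v s) = insert (f v) (oddParts f s) := by
      ext a; rw [mem_oddParts_insert hv, mem_insert]; by_cases a = f v <;> simp_all
    have heven := Nat.not_odd_iff.mp (mt hmem.mpr h)
    rw [hins, card_insert_of_notMem h]
    omega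

end OddParts

section Prefix

variable {V : Type*} [Fintype V] {n : ℕ} (π : Fin n ≃ V)

def prefixFinset (k : ℕ) : Finset V := {v | (π.symm v : ℕ) < k}

@[simp]
lemma mem_prefixFinset {k : ℕ} {v : V} : v ∈ prefixFinset π k ↔ (π.symm v : ℕ) < k := by
  simp [prefixFinset]

lemma prefixFinset_zero : prefixFinset π 0 = ∅ := by
  ext; simp

lemma prefixFinset_of_le {k : ℕ} (hk : n ≤ k) : prefixFinset π k = univ := by
  ext v; simpa using (π.symm v).isLt.trans_le hk

lemma apply_notMem_prefixFinset (k : Fin n) : π k ∉ prefixFinset π k := by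
  simp

lemma prefixFinset_succ [DecidableEq V] (k : Fin n) :
    prefixFinset π (k + 1) = insert (π k) (prefixFinset π k) := by
  ext v
  rw [mem_insert, mem_prefixFinset, mem_prefixFinset, Nat.lt_succ_iff_lt_or_eq, or_comm,
    ← Fin.ext_iff, Equiv.symm_apply_eq]

lemma coe_prefixFinset_succ (i : Fin n) :
    (prefixFinset π (i + 1) : Set V) = {v | ∃ j ≤ i, π j = v} := by
  ext v
  simp only [mem_coe, mem_prefixFinset, Nat.lt_succ_iff]
  exact ⟨fun h => ⟨π.symm v, h, by simp⟩, fun ⟨j, hj, hjv⟩ => by simpa [← hjv] using hj⟩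

end Prefix

section EvenSequence

variable {V : Type*} [Fintype V] {n : ℕ} {π : Fin n ≃ V}

lemma card_oddParts_prefixFinset [DecidableEq V] {ι : Type*} [Fintype ι] [DecidableEq ι]
    (f : V → ι) (hπ : ∀ k : Fin n, Even #{u ∈ prefixFinset π k | f u ≠ f (π k)})
    {k : ℕ} (hk : k ≤ n) :
    #(oddParts f (prefixFinset π k)) = #(prefixFinset π k) % 2 := by
  induction k with
  | zero => simp [prefixFinset_zero, oddParts]
  | succ k ih =>
    rw [prefixFinset_succ π ⟨k, hk⟩]
    exact card_oddParts_insert (apply_notMem_prefixFinset π _) (ih (by omega)) (hπ ⟨k, hk⟩)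

variable (G : SimpleGraph V) [DecidableRel G.Adj]

lemma even_inducedEdgeCount_prefixFinset
    (hπ : ∀ i, Even (inducedEdgeCount G {v | ∃ j ≤ i, π j = v})) {k : ℕ} (hk : k ≤ n) :
    Even (inducedEdgeCount G ↑(prefixFinset π k)) := by
  cases k with
  | zero => rw [prefixFinset_zero, G.inducedEdgeCount_coe_finset]; simp
  | succ i => simpa [coe_prefixFinset_succ π ⟨i, hk⟩] using hπ ⟨i, hk⟩

lemma even_card_adj_prefixFinset [DecidableEq V]
    (hπ : ∀ i, Even (inducedEdgeCount G {v | ∃ j ≤ i, π j = v})) (k : Fin n) :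
    Even #{u ∈ prefixFinset π k | G.Adj (π k) u} := by
  have hsucc := even_inducedEdgeCount_prefixFinset G hπ k.isLt
  rw [prefixFinset_succ, G.inducedEdgeCount_insert (apply_notMem_prefixFinset π k)] at hsucc
  exact (Nat.even_add.mp hsucc).mp (even_inducedEdgeCount_prefixFinset G hπ k.isLt.le)

end EvenSequence

theorem stmt13_general {V : Type*} [Fintype V] (G : SimpleGraph V)
    (r : ℕ) (f : V → Fin r) (hG : ∀ u v, G.Adj u v ↔ f u ≠ f v)
    (i j : Fin r) (hij : i ≠ j)
    (hi : Odd (Nat.card {v // f v = i})) (hj : Odd (Nat.card {v // f v = j})) :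
    eta V G = 0 := by
  classical
  refine Nat.card_eq_zero.mpr (Or.inl ⟨fun ⟨π, hπ⟩ => ?_⟩)
  have hcard : #(oddParts f univ) = Fintype.card V % 2 := by
    have hall := card_oddParts_prefixFinset f (π := π) (fun k => by
      simpa [hG, ne_comm] using even_card_adj_prefixFinset G hπ k) le_rfl
    rwa [prefixFinset_of_le π le_rfl, card_univ] at hall
  have hpair : {i, j} ⊆ oddParts f univ := by
    simp [insert_subset_iff, oddParts, ← Fintype.card_subtype, ← Nat.card_eq_fintype_card, hi, hj]
  have hle := card_le_card hpair
  rw [card_pair hij] at hle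
  omega

theorem stmt13 {V : Type*} [Fintype V] [DecidableEq V] (G : SimpleGraph V)
    (r : ℕ) (f : V → Fin r) (hG : ∀ u v, G.Adj u v ↔ f u ≠ f v)
    (i j : Fin r) (hij : i ≠ j)
    (hi : Odd (Nat.card {v // f v = i})) (hj : Odd (Nat.card {v // f v = j})) :
    eta V G = 0 :=
  stmt13_general G r f hG i j hij hi hj
end

section
/- For positive integers n_1,…,n_r with n = n_1+⋯+n_r, the absolute value of the t-multinomial coefficient [n; n_1,…,n_r]_t evaluated at t = −1 equals 0 if at least two of the n_i are odd, and equals binomial(⌊n/2⌋; ⌊n_1/2⌋,…,⌊n_r/2⌋) otherwise. -/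
open Polynomial

noncomputable def gP (k : ℕ) : Polynomial ℤ :=
  if Even (k + 1) then ∑ j ∈ Finset.range ((k + 1) / 2), X ^ (2 * j)
  else ∑ j ∈ Finset.range (k + 1), X ^ j

noncomputable def QF (n : ℕ) : Polynomial ℤ := ∏ k ∈ Finset.range n, gP k

lemma even_factor (a : ℕ) :
    (∑ j ∈ Finset.range (2 * a), (X : Polynomial ℤ) ^ j)
      = (X + 1) * ∑ j ∈ Finset.range a, X ^ (2 * j) := by
  induction a with
  | zero => simp
  | succ a ih =>
    have h2 : 2 * (a + 1) = (2 * a) + 1 + 1 := by ring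
    rw [h2, Finset.sum_range_succ, Finset.sum_range_succ, ih, Finset.sum_range_succ,
      mul_add]
    ring

lemma factor_g (k : ℕ) :
    (∑ j ∈ Finset.range (k + 1), (X : Polynomial ℤ) ^ j)
      = (X + 1) ^ (if Even (k + 1) then 1 else 0) * gP k := by
  unfold gP
  by_cases h : Even (k + 1)
  · obtain ⟨a, ha⟩ := h
    have hk : k + 1 = 2 * a := by omega
    have h2 : (k + 1) / 2 = a := by omega
    rw [if_pos ⟨a, by omega⟩, pow_one, h2, hk, even_factor, if_pos (even_two_mul a)]
  · simp [h]

lemma sumE (n : ℕ) :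
    (∑ k ∈ Finset.range n, if Even (k + 1) then 1 else 0) = n / 2 := by
  induction n with
  | zero => simp
  | succ n ih =>
    rw [Finset.sum_range_succ, ih]
    by_cases h : Even (n + 1)
    · rw [if_pos h]
      obtain ⟨a, ha⟩ := h
      omega
    · rw [if_neg h]
      rw [Nat.even_add_one, not_not] at h
      obtain ⟨a, ha⟩ := h
      omega

lemma qFact_eq (n : ℕ) : qFact n = (X + 1) ^ (n / 2) * QF n := by
  unfold qFact QF
  rw [← sumE n, ← Finset.prod_pow_eq_pow_sum, ← Finset.prod_mul_distrib]
  exact Finset.prod_congr rfl fun k _ => factor_g k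

lemma QF_eval (n : ℕ) : (QF n).eval (-1) = ((n / 2).factorial : ℤ) := by
  induction n with
  | zero => simp [QF]
  | succ n ih =>
    unfold QF at ih ⊢
    rw [Finset.prod_range_succ, eval_mul, ih]
    unfold gP
    by_cases h : Even (n + 1)
    · rw [if_pos h]
      obtain ⟨a, ha⟩ := h
      have h1 : (n + 1) / 2 = a := by omega
      have h2 : n / 2 = a - 1 := by omega
      have ha1 : 1 ≤ a := by omega
      simp only [eval_finset_sum, eval_pow, eval_X, h1, h2]
      have : ∀ j ∈ Finset.range a, ((-1 : ℤ)) ^ (2 * j) = 1 := fun j _ => by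
        rw [pow_mul]; norm_num
      rw [Finset.sum_congr rfl this, Finset.sum_const, Finset.card_range, nsmul_eq_mul,
        mul_one]
      rw [show a = (a - 1) + 1 by omega, Nat.factorial_succ]
      push_cast
      ring
    · rw [if_neg h]
      simp only [eval_finset_sum, eval_pow, eval_X]
      rw [neg_one_geom_sum, if_neg h]
      have : (n + 1) / 2 = n / 2 := by
        rw [Nat.even_add_one, not_not] at h
        obtain ⟨a, ha⟩ := h; omega
      rw [this, mul_one]

theorem stmt15 {r : ℕ} (m : Fin r → ℕ) (hm : ∀ i, 0 < m i) (P : Polynomial ℤ)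
    (hP : P * ∏ i, qFact (m i) = qFact (∑ i, m i)) :
    (P.eval (-1)).natAbs =
      if ∃ i j, i ≠ j ∧ Odd (m i) ∧ Odd (m j) then 0
      else Nat.multinomial Finset.univ (fun i => m i / 2) := by
  classical
  set S : ℕ := ∑ i, m i / 2 with hS
  set A : ℕ := (∑ i, m i) / 2 with hA
  set d : ℕ := ∑ i, m i % 2 with hd
  have hkey : ∑ i, m i = 2 * S + d := by
    rw [hS, hd, Finset.mul_sum, ← Finset.sum_add_distrib]
    exact Finset.sum_congr rfl fun i _ => by omega
  have hX1 : ((X : Polynomial ℤ) + 1) ≠ 0 := by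
    intro h
    have := congrArg (eval 0) h
    simp at this
  -- rewrite hP
  simp only [qFact_eq] at hP
  rw [Finset.prod_mul_distrib, Finset.prod_pow_eq_pow_sum] at hP
  have hP' : P * (∏ i, QF (m i)) * (X + 1) ^ S = (X + 1) ^ A * QF (∑ i, m i) := by
    rw [← hP]; ring
  have hQne : (∏ i, (QF (m i)).eval (-1)) ≠ 0 := by
    apply Finset.prod_ne_zero_iff.mpr
    intro i _
    rw [QF_eval]
    exact_mod_cast Nat.factorial_ne_zero _
  have hcard : d = (Finset.univ.filter fun i => Odd (m i)).card := by
    rw [hd, Finset.card_filter]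
    exact Finset.sum_congr rfl fun i _ => by
      by_cases h : Odd (m i)
      · rw [if_pos h, Nat.odd_iff] at *; omega
      · rw [if_neg h]; rw [Nat.odd_iff] at h; omega
  by_cases hcase : ∃ i j, i ≠ j ∧ Odd (m i) ∧ Odd (m j)
  · rw [if_pos hcase]
    obtain ⟨i, j, hij, hi, hj⟩ := hcase
    have hd2 : 2 ≤ d := by
      rw [hcard]
      have : ({i, j} : Finset (Fin r)) ⊆ Finset.univ.filter fun i => Odd (m i) := by
        intro x hx
        simp only [Finset.mem_insert, Finset.mem_singleton] at hx
        rcases hx with rfl | rfl <;> simp [hi, hj]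
      calc 2 = ({i, j} : Finset (Fin r)).card := by rw [Finset.card_pair hij]
        _ ≤ _ := Finset.card_le_card this
    obtain ⟨D, hD, hD1⟩ : ∃ D, A = S + D ∧ 1 ≤ D := ⟨A - S, by omega, by omega⟩
    have h2 : P * (∏ i, QF (m i)) = (X + 1) ^ D * QF (∑ i, m i) := by
      apply mul_right_cancel₀ (pow_ne_zero S hX1)
      rw [hP', hD, pow_add]
      ring
    have h3 := congrArg (eval (-1)) h2
    simp only [eval_mul, eval_pow, eval_add, eval_X, eval_one, eval_prod] at h3
    rw [show ((-1 : ℤ)) + 1 = 0 from by ring, zero_pow (by omega : D ≠ 0), zero_mul] at h3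
    have hP0 : P.eval (-1) = 0 := by
      rcases mul_eq_zero.mp h3 with h | h
      · exact h
      · exact absurd h hQne
    simp [hP0]
  · rw [if_neg hcase]
    have hd1 : d ≤ 1 := by
      by_contra h
      push_neg at h
      rw [hcard] at h
      obtain ⟨i, hi, j, hj, hij⟩ := Finset.one_lt_card.mp h
      simp only [Finset.mem_filter] at hi hj
      exact hcase ⟨i, j, hij, hi.2, hj.2⟩
    have hAS : A = S := by omega
    have h2 : P * (∏ i, QF (m i)) = QF (∑ i, m i) := by
      apply mul_right_cancel₀ (pow_ne_zero S hX1)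
      rw [hP', hAS]
      ring
    have := congrArg (eval (-1)) h2
    simp only [eval_mul, eval_prod] at this
    have heval : ∀ i ∈ Finset.univ, (QF (m i)).eval (-1) = ((m i / 2).factorial : ℤ) :=
      fun i _ => QF_eval (m i)
    rw [Finset.prod_congr rfl heval, QF_eval] at this
    have h3 := congrArg Int.natAbs this
    rw [Int.natAbs_mul, ← Nat.cast_prod, Int.natAbs_natCast, Int.natAbs_natCast] at h3
    have hAsum : (∑ i, m i) / 2 = ∑ i, m i / 2 := by omega
    rw [hAsum] at h3
    have hspec := Nat.multinomial_spec Finset.univ (fun i => m i / 2)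
    exact Nat.eq_of_mul_eq_mul_right
      (Finset.prod_pos fun i _ => Nat.factorial_pos _)
      (by rw [h3, ← hspec, mul_comm])
end

section
/- If D is an n-vertex digraph, then the multiplicity of −1 as a root of A_D(t) is at most n − s_2(n), where s_2(n) is the number of 1's in the binary expansion of n. Moreover, for every n there exists an n-vertex digraph D with A_D(t) = (n!/2^{n−s_2(n)}) · (1+t)^{n−s_2(n)}. -/
open Polynomial

/-!
Since `A_D(1) = n!`, a factor `(1 + t)^m` of `A_D` forces `2^m ∣ n!`, and by Legendre's formula
`v₂(n!) = n - s₂(n)`.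

For the extremal digraphs: if `φ` is an automorphism of `D` exchanging two vertices `u ≠ v`, then
adding the arc `(u, v)` turns `A_D` into `(1 + t)/2 · A_D`, because pairing each labeling `σ`
with `σ ∘ φ` makes the new arc a descent for exactly one labeling of each pair. Starting from
the empty digraph, two copies of a digraph joined by one arc between corresponding vertices
gain one such factor over the disjoint union; this builds a binomial tree on `2^k` vertices with
`2^k - 1` factors, and the disjoint union of the trees for the binary digits of `n` has
`n - s₂(n)` factors.
-/

open Finset

theorem padicValNat_two_factorial (n : ℕ) :
    padicValNat 2 n.factorial = n - (Nat.digits 2 n).sum := by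
  simpa using sub_one_mul_padicValNat_factorial (p := 2) n

theorem Nat.digits_sum_two_pow_add {k r : ℕ} (hr : r < 2 ^ k) :
    (Nat.digits 2 (2 ^ k + r)).sum = (Nat.digits 2 r).sum + 1 := by
  have hlen : (Nat.digits 2 r).length ≤ k := (Nat.digits_length_le_iff one_lt_two r).2 hr
  have h := Nat.digits_append_zeroes_append_digits (k := k - (Nat.digits 2 r).length)
    (n := r) (m := 1) one_lt_two one_pos
  rw [Nat.add_sub_cancel' hlen, mul_one, add_comm r] at h
  rw [← h]
  simp

section

variable {V W : Type*} [Fintype V] [Fintype W]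

theorem eulerianPoly_eval_one [DecidableEq V] (D : V → V → Prop) :
    (eulerianPoly V D).eval 1 = (Fintype.card V).factorial := by
  simp [eulerianPoly, eval_finsetSum, Fintype.card_equiv (Fintype.equivFin V)]

theorem rootMultiplicity_neg_one_eulerianPoly_le [DecidableEq V] (D : V → V → Prop) :
    (eulerianPoly V D).rootMultiplicity (-1) ≤
      Fintype.card V - (Nat.digits 2 (Fintype.card V)).sum := by
  obtain ⟨q, hq⟩ := pow_rootMultiplicity_dvd (eulerianPoly V D) (-1)
  have hdvd : 2 ^ (eulerianPoly V D).rootMultiplicity (-1) ∣ (Fintype.card V).factorial := by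
    have := congrArg (eval 1) hq
    rw [eulerianPoly_eval_one] at this
    exact Int.natCast_dvd_natCast.1 ⟨q.eval 1, by simpa [one_add_one_eq_two] using this⟩
  rw [← padicValNat_two_factorial]
  exact (padicValNat_dvd_iff_le (Nat.factorial_ne_zero _)).1 hdvd

theorem desD_equivCongr (e : V ≃ W) (D : W → W → Prop) (τ : W ≃ Fin (Fintype.card W)) :
    desD (fun x y => D (e x) (e y))
      (e.symm.equivCongr (finCongr (Fintype.card_congr e).symm) τ) = desD D τ :=
  Nat.card_congr <| (Equiv.prodCongr e e).subtypeEquiv fun p => by simp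

theorem eulerianPoly_equivCongr [DecidableEq V] [DecidableEq W] (e : V ≃ W)
    (D : W → W → Prop) :
    eulerianPoly V (fun x y => D (e x) (e y)) = eulerianPoly W D :=
  (Fintype.sum_equiv (e.symm.equivCongr (finCongr (Fintype.card_congr e).symm)) _ _
    fun τ => by rw [desD_equivCongr]).symm

end

def addArc {V : Type*} (D : V → V → Prop) (u v : V) : V → V → Prop :=
  fun x y => D x y ∨ (x = u ∧ y = v)

section

variable {V : Type*} [Fintype V]

theorem desD_addArc {D : V → V → Prop} {u v : V} (hD : ¬ D u v)
    (σ : V ≃ Fin (Fintype.card V)) :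
    desD (addArc D u v) σ = desD D σ + if σ v < σ u then 1 else 0 := by
  classical
  simp only [desD, Nat.card_eq_fintype_card, Fintype.card_subtype, card_filter]
  have hsplit : ∀ p : V × V,
      (if addArc D u v p.1 p.2 ∧ σ p.2 < σ p.1 then 1 else 0) =
        (if D p.1 p.2 ∧ σ p.2 < σ p.1 then 1 else 0) +
          if p = (u, v) then (if σ v < σ u then 1 else 0) else 0 := by
    rintro ⟨x, y⟩
    by_cases hxy : (x, y) = (u, v)
    · obtain ⟨rfl, rfl⟩ := Prod.ext_iff.1 hxy
      simp [addArc, hD]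
    · have : ¬ (x = u ∧ y = v) := fun h => hxy (by rw [h.1, h.2])
      simp [addArc, hxy, this]
  rw [sum_congr rfl fun p _ => hsplit p, sum_add_distrib, sum_ite_eq']
  simp

theorem two_mul_eulerianPoly_addArc [DecidableEq V] {D : V → V → Prop} {u v : V}
    (huv : u ≠ v) (hD : ¬ D u v) (φ : V ≃ V) (hφ : ∀ x y, D (φ x) (φ y) ↔ D x y)
    (hu : φ u = v) (hv : φ v = u) :
    2 * eulerianPoly V (addArc D u v) = (1 + X) * eulerianPoly V D := by
  set ψ := φ.symm.equivCongr (finCongr (Fintype.card_congr φ).symm)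
  have hDφ : (fun x y => D (φ x) (φ y)) = D := funext₂ fun x y => propext (hφ x y)
  have hpair : ∀ σ, (X : ℤ[X]) ^ desD (addArc D u v) σ + X ^ desD (addArc D u v) (ψ σ) =
      (1 + X) * X ^ desD D σ := by
    intro σ
    have hψ : desD D (ψ σ) = desD D σ := by rw [← desD_equivCongr φ D σ, hDφ]
    rw [desD_addArc hD, desD_addArc hD, hψ]
    simp only [ψ, Equiv.equivCongr_apply_apply, Equiv.symm_symm, hu, hv, finCongr_apply,
      Fin.cast_lt_cast]
    rcases (σ.injective.ne huv).lt_or_gt with h | h <;> simp [h, h.not_gt, pow_add] <;> ring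
  calc 2 * eulerianPoly V (addArc D u v)
      = ∑ σ, (X ^ desD (addArc D u v) σ + X ^ desD (addArc D u v) (ψ σ)) := by
        rw [sum_add_distrib, ψ.sum_comp (fun σ => (X : ℤ[X]) ^ desD (addArc D u v) σ), two_mul]
        rfl
    _ = (1 + X) * eulerianPoly V D := by
        rw [eulerianPoly, mul_sum]
        exact sum_congr rfl fun σ _ => hpair σ

end

inductive SwapBuilt {V : Type*} : (V → V → Prop) → ℕ → Prop
  | empty : SwapBuilt (fun _ _ => False) 0
  | addArc {D : V → V → Prop} {m : ℕ} {u v : V} (φ : V ≃ V) :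
      SwapBuilt D m → u ≠ v → ¬ D u v → (∀ x y, D (φ x) (φ y) ↔ D x y) → φ u = v → φ v = u →
        SwapBuilt (addArc D u v) (m + 1)

namespace SwapBuilt

variable {V W : Type*}

theorem irrefl {D : V → V → Prop} {m : ℕ} (h : SwapBuilt D m) (x : V) : ¬ D x x := by
  induction h with
  | empty => exact id
  | addArc _ _ huv _ _ _ _ ih => rintro (h | ⟨rfl, rfl⟩) <;> contradiction

theorem two_pow_mul_eulerianPoly [Fintype V] [DecidableEq V] {D : V → V → Prop} {m : ℕ}
    (h : SwapBuilt D m) :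
    2 ^ m * eulerianPoly V D = ((Fintype.card V).factorial : ℤ[X]) * (1 + X) ^ m := by
  induction h with
  | empty => simp [eulerianPoly, desD, Fintype.card_equiv (Fintype.equivFin V)]
  | addArc φ _ huv hD hφ hu hv ih =>
    rw [pow_succ, mul_assoc, two_mul_eulerianPoly_addArc huv hD φ hφ hu hv, mul_left_comm, ih]
    ring

theorem eulerianPoly_eq [Fintype V] [DecidableEq V] {D : V → V → Prop} {m : ℕ}
    (h : SwapBuilt D m) :
    eulerianPoly V D = C (((Fintype.card V).factorial / 2 ^ m : ℕ) : ℤ) * (1 + X) ^ m := by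
  have hA := h.two_pow_mul_eulerianPoly
  obtain ⟨a, ha⟩ : 2 ^ m ∣ (Fintype.card V).factorial := by
    refine Int.natCast_dvd_natCast.1 ⟨(eulerianPoly V D).eval 0, ?_⟩
    simpa using (congrArg (eval 0) hA).symm
  rw [ha, Nat.mul_div_cancel_left _ (by positivity)]
  refine mul_left_cancel₀ (pow_ne_zero m two_ne_zero) (hA.trans ?_)
  rw [ha]
  simp [mul_assoc]

theorem liftRel_bot_left {E : W → W → Prop} {k : ℕ} (h : SwapBuilt E k) :
    SwapBuilt (Sum.LiftRel (fun (_ _ : V) => False) E) k := by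
  induction h with
  | empty =>
    convert SwapBuilt.empty using 1
    funext x y
    cases x <;> cases y <;> simp
  | addArc φ _ huv hD hφ hu hv ih =>
    convert ih.addArc (φ := Equiv.sumCongr (Equiv.refl V) φ) (u := .inr _) (v := .inr _)
      (by simpa using huv) (by simpa using hD) ?_ (by simp [hu]) (by simp [hv]) using 1
    · funext x y
      cases x <;> cases y <;> simp [_root_.addArc]
    · rintro (x | x) (y | y) <;> simp [hφ]

theorem liftRel {D : V → V → Prop} {E : W → W → Prop} {m k : ℕ} (hD : SwapBuilt D m)
    (hE : SwapBuilt E k) : SwapBuilt (Sum.LiftRel D E) (m + k) := by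
  induction hD with
  | empty => simpa using liftRel_bot_left hE
  | addArc φ _ huv hD hφ hu hv ih =>
    rw [add_right_comm]
    convert ih.addArc (φ := Equiv.sumCongr φ (Equiv.refl W)) (u := .inl _) (v := .inl _)
      (by simpa using huv) (by simpa using hD) ?_ (by simp [hu]) (by simp [hv]) using 1
    · funext x y
      cases x <;> cases y <;> simp [_root_.addArc]
    · rintro (x | x) (y | y) <;> simp [hφ]

theorem double {D : V → V → Prop} {m : ℕ} (h : SwapBuilt D m) (b : V) :
    SwapBuilt (_root_.addArc (Sum.LiftRel D D) (.inl b) (.inr b)) (2 * m + 1) := by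
  rw [two_mul]
  exact (h.liftRel h).addArc (Equiv.sumComm V V) Sum.inl_ne_inr (by simp)
    (by rintro (x | x) (y | y) <;> simp) rfl rfl

end SwapBuilt

theorem exists_swapBuilt_two_pow (k : ℕ) :
    ∃ (V : Type) (_ : Fintype V) (D : V → V → Prop),
      Fintype.card V = 2 ^ k ∧ SwapBuilt D (2 ^ k - 1) := by
  induction k with
  | zero => exact ⟨Unit, inferInstance, _, rfl, SwapBuilt.empty⟩
  | succ k ih =>
    obtain ⟨V, _, D, hV, hD⟩ := ih
    obtain ⟨b⟩ : Nonempty V := Fintype.card_pos_iff.1 (hV ▸ Nat.two_pow_pos k)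
    refine ⟨V ⊕ V, inferInstance, addArc (Sum.LiftRel D D) (.inl b) (.inr b),
      by simp [hV, pow_succ, mul_two], ?_⟩
    convert hD.double b using 1
    have := Nat.two_pow_pos k
    rw [pow_succ]
    omega

theorem exists_swapBuilt (n : ℕ) :
    ∃ (V : Type) (_ : Fintype V) (D : V → V → Prop),
      Fintype.card V = n ∧ SwapBuilt D (n - (Nat.digits 2 n).sum) := by
  induction n using Nat.strong_induction_on with
  | _ n ih =>
  rcases Nat.eq_zero_or_pos n with rfl | hn
  · exact ⟨Empty, inferInstance, _, rfl, SwapBuilt.empty⟩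
  have hlow := Nat.pow_log_le_self 2 hn.ne'
  have hhigh := Nat.lt_pow_succ_log_self one_lt_two n
  generalize Nat.log 2 n = k at hlow hhigh
  obtain ⟨r, rfl⟩ : ∃ r, n = 2 ^ k + r := ⟨n - 2 ^ k, by omega⟩
  have hr : r < 2 ^ k := by
    rw [pow_succ] at hhigh
    omega
  obtain ⟨V, _, D, hV, hD⟩ := exists_swapBuilt_two_pow k
  obtain ⟨W, _, E, hW, hE⟩ := ih r (by omega)
  refine ⟨V ⊕ W, inferInstance, Sum.LiftRel D E, by simp [hV, hW], ?_⟩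
  convert hD.liftRel hE using 1
  have := Nat.digit_sum_le 2 r
  have := Nat.two_pow_pos k
  rw [Nat.digits_sum_two_pow_add hr]
  omega

theorem stmt19 (n : ℕ) :
    (∀ (V : Type) [Fintype V] [DecidableEq V] (D : V → V → Prop),
      (∀ v, ¬ D v v) → Fintype.card V = n →
        (eulerianPoly V D).rootMultiplicity (-1) ≤ n - (Nat.digits 2 n).sum) ∧
    ∃ D : Fin n → Fin n → Prop, (∀ v, ¬ D v v) ∧
      eulerianPoly (Fin n) D =
        C ((n.factorial / 2 ^ (n - (Nat.digits 2 n).sum) : ℕ) : ℤ) *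
          (1 + X) ^ (n - (Nat.digits 2 n).sum) := by
  refine ⟨fun V _ _ D _ hV => hV ▸ rootMultiplicity_neg_one_eulerianPoly_le D, ?_⟩
  obtain ⟨V, _, D, hV, hD⟩ := exists_swapBuilt n
  classical
  let e : Fin n ≃ V := (Fintype.equivFinOfCardEq hV).symm
  refine ⟨fun x y => D (e x) (e y), fun x => hD.irrefl (e x), ?_⟩
  rw [eulerianPoly_equivCongr, hD.eulerianPoly_eq, hV]
end
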